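/- arXiv:1711.05606 — 7 statements merged into one kernel-verified Lean document; each statement's English description precedes it below -/
import Mathlib

section
/- Let ι : ℚ(X) → ℚ(X) be the unique ℚ-algebra field homomorphism of the field ℚ(X) of rational functions in one variable (RatFunc ℚ) satisfying ι(X) = X⁻¹, and set w := X/(X² + 4X + 1) ∈ ℚ(X). Then for every f ∈ ℚ(X): ι(f) = f if and only if there exist polynomials P, Q ∈ ℚ[t] with Q ≠ 0 such that f = P(w)/Q(w). (In the paper's language: a function is rational in z if and only if it is rational and symmetric in D, where z = 1/(D⁻¹ + 4 + D).) -/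
/-!
With `u = X + X⁻¹` we have `X ^ 2 = u * X - 1`, so every element of `k(X)` can be written as
`a + b * X` with `a, b ∈ k(u)` (inverses via the norm `(a + b * X) * (a + b * u - b * X)`).
The involution `X ↦ X⁻¹` fixes `k(u)` and sends `a + b * X` to `a + b * X⁻¹`, so such an element is
fixed exactly when `b = 0`. Finally `w⁻¹ = u + 4`, hence `k(w) = k(u)`.
-/

open IntermediateField

namespace IntermediateField

variable {F E : Type*} [Field F] [Field E] [Algebra F E]

open Polynomial in
theorem mem_adjoin_simple_iff_exists_ne_zero {α x : E} :
    x ∈ F⟮α⟯ ↔ ∃ P Q : F[X], Q ≠ 0 ∧ x = aeval α P / aeval α Q := by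
  rw [mem_adjoin_simple_iff]
  constructor
  · rintro ⟨P, Q, rfl⟩
    by_cases hQ : aeval α Q = 0
    · exact ⟨0, 1, one_ne_zero, by simp [hQ]⟩
    · exact ⟨P, Q, by rintro rfl; simp at hQ, rfl⟩
  · rintro ⟨P, Q, -, rfl⟩
    exact ⟨P, Q, rfl⟩

theorem adjoin_simple_inv_add_algebraMap (α : E) (c : F) :
    F⟮(α + algebraMap F E c)⁻¹⟯ = F⟮α⟯ := by
  refine le_antisymm (adjoin_simple_le_iff.mpr ?_) (adjoin_simple_le_iff.mpr ?_)
  · exact inv_mem (add_mem (mem_adjoin_simple_self F α) (algebraMap_mem _ c))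
  · have h := inv_mem (mem_adjoin_simple_self F (α + algebraMap F E c)⁻¹)
    rw [inv_inv] at h
    simpa using sub_mem h (algebraMap_mem _ c)

theorem apply_eq_self_of_mem_adjoin (φ : E →ₐ[F] E) {S : Set E} (hS : ∀ a ∈ S, φ a = a)
    {x : E} (hx : x ∈ adjoin F S) : φ x = x :=
  congr($(adjoin_algHom_ext F (φ₁ := φ.comp (adjoin F S).val) (φ₂ := (adjoin F S).val)
    fun a ha ↦ hS a ha) ⟨x, hx⟩)

section Quadratic

variable (K : IntermediateField F E) {x s p : E}

theorem eq_zero_of_add_mul_eq_zero (hxK : x ∉ K) {a b : E} (ha : a ∈ K) (hb : b ∈ K)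
    (h : a + b * x = 0) : a = 0 ∧ b = 0 := by
  have hb0 : b = 0 := by
    by_contra hb0
    refine hxK ?_
    rw [show x = -a / b by field_simp; linear_combination h]
    exact div_mem (neg_mem ha) hb
  exact ⟨by simpa [hb0] using h, hb0⟩

theorem exists_inv_add_mul_eq (hs : s ∈ K) (hp : p ∈ K) (hx : x ^ 2 = s * x - p)
    {a b : E} (ha : a ∈ K) (hb : b ∈ K) : ∃ c ∈ K, ∃ d ∈ K, (a + b * x)⁻¹ = c + d * x := by
  by_cases hxK : x ∈ K
  · exact ⟨_, inv_mem (add_mem ha (mul_mem hb hxK)), 0, zero_mem K, by ring⟩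
  by_cases h0 : a + b * x = 0
  · exact ⟨0, zero_mem K, 0, zero_mem K, by simp [h0]⟩
  have hconj : a + b * s + -b * x ≠ 0 := fun h ↦ by
    obtain ⟨h₁, h₂⟩ :=
      eq_zero_of_add_mul_eq_zero K hxK (add_mem ha (mul_mem hb hs)) (neg_mem hb) h
    obtain rfl : b = 0 := neg_eq_zero.mp h₂
    exact h0 (by simpa using h₁)
  set N := a ^ 2 + a * b * s + b ^ 2 * p
  have hnorm : (a + b * x) * (a + b * s + -b * x) = N := by linear_combination (-b ^ 2) * hx
  have hN : N ≠ 0 := hnorm ▸ mul_ne_zero h0 hconj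
  have hNK : N ∈ K :=
    add_mem (add_mem (pow_mem ha 2) (mul_mem (mul_mem ha hb) hs)) (mul_mem (pow_mem hb 2) hp)
  refine ⟨(a + b * s) / N, div_mem (add_mem ha (mul_mem hb hs)) hNK, -b / N,
    div_mem (neg_mem hb) hNK, inv_eq_of_mul_eq_one_right ?_⟩
  rw [show (a + b * s) / N + -b / N * x = (a + b * s + -b * x) / N by ring, ← mul_div_assoc,
    hnorm, div_self hN]

theorem exists_eq_add_mul_of_mem_adjoin_simple (hs : s ∈ K) (hp : p ∈ K)
    (hx : x ^ 2 = s * x - p) {y : E} (hy : y ∈ F⟮x⟯) : ∃ a ∈ K, ∃ b ∈ K, y = a + b * x := by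
  induction hy using adjoin_induction with
  | mem y hy =>
    rw [Set.mem_singleton_iff.mp hy]
    exact ⟨0, zero_mem K, 1, one_mem K, by ring⟩
  | algebraMap r => exact ⟨_, K.algebraMap_mem r, 0, zero_mem K, by ring⟩
  | add y z _ _ hy hz =>
    obtain ⟨a, ha, b, hb, rfl⟩ := hy
    obtain ⟨c, hc, d, hd, rfl⟩ := hz
    exact ⟨a + c, add_mem ha hc, b + d, add_mem hb hd, by ring⟩
  | inv y _ hy =>
    obtain ⟨a, ha, b, hb, rfl⟩ := hy
    exact exists_inv_add_mul_eq K hs hp hx ha hb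
  | mul y z _ _ hy hz =>
    obtain ⟨a, ha, b, hb, rfl⟩ := hy
    obtain ⟨c, hc, d, hd, rfl⟩ := hz
    exact ⟨a * c - b * d * p, sub_mem (mul_mem ha hc) (mul_mem (mul_mem hb hd) hp),
      a * d + b * c + b * d * s,
      add_mem (add_mem (mul_mem ha hd) (mul_mem hb hc)) (mul_mem (mul_mem hb hd) hs),
      by linear_combination b * d * hx⟩

end Quadratic

end IntermediateField

section RatFunc

open RatFunc (X X_ne_zero algebraMap_X algebraMap_injective adjoin_X)

variable {k : Type*} [Field k]

theorem RatFunc.X_inv_ne_X : (X : RatFunc k)⁻¹ ≠ X := by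
  intro h
  have h2 : algebraMap (Polynomial k) (RatFunc k) (Polynomial.X ^ 2) = algebraMap _ _ 1 := by
    rw [map_pow, map_one, algebraMap_X, sq]
    calc X * X = X * X⁻¹ := by rw [h]
      _ = 1 := mul_inv_cancel₀ X_ne_zero
  simpa using congrArg Polynomial.natDegree (algebraMap_injective k h2)

theorem RatFunc.X_sq_eq_X_add_X_inv_mul_X_sub_one : (X : RatFunc k) ^ 2 = (X + X⁻¹) * X - 1 := by
  rw [add_mul, inv_mul_cancel₀ X_ne_zero]
  ring

theorem RatFunc.apply_eq_self_iff_mem_adjoin_X_add_X_inv (ι : RatFunc k →ₐ[k] RatFunc k)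
    (hι : ι X = X⁻¹) (f : RatFunc k) : ι f = f ↔ f ∈ k⟮X + X⁻¹⟯ := by
  have hu : ι (X + X⁻¹) = X + X⁻¹ := by rw [map_add, map_inv₀, hι, inv_inv, add_comm]
  have hfix : ∀ y ∈ k⟮X + X⁻¹⟯, ι y = y := fun y ↦ apply_eq_self_of_mem_adjoin ι (by simpa using hu)
  refine ⟨fun hf ↦ ?_, hfix f⟩
  have hfX : f ∈ k⟮X⟯ := by rw [adjoin_X]; trivial
  obtain ⟨a, ha, b, hb, rfl⟩ := exists_eq_add_mul_of_mem_adjoin_simple k⟮X + X⁻¹⟯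
    (mem_adjoin_simple_self k _) (one_mem _) RatFunc.X_sq_eq_X_add_X_inv_mul_X_sub_one hfX
  rw [map_add, map_mul, hfix a ha, hfix b hb, hι] at hf
  have hb0 : b = 0 := by
    have : b * (X⁻¹ - X) = 0 := by linear_combination hf
    exact (mul_eq_zero.mp this).resolve_right (sub_ne_zero.mpr RatFunc.X_inv_ne_X)
  simpa [hb0] using ha

theorem RatFunc.apply_eq_self_iff_exists_eq_aeval_div_aeval (ι : RatFunc k →ₐ[k] RatFunc k)
    (hι : ι X = X⁻¹) (c : k) {w : RatFunc k} (hw : w = X / (X ^ 2 + algebraMap k _ c * X + 1))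
    (f : RatFunc k) :
    ι f = f ↔ ∃ P Q : Polynomial k, Q ≠ 0 ∧ f = Polynomial.aeval w P / Polynomial.aeval w Q := by
  have hw' : w = (X + X⁻¹ + algebraMap k _ c)⁻¹ := by
    rw [hw, ← inv_div]
    congr 1
    field_simp [X_ne_zero]
    ring
  rw [RatFunc.apply_eq_self_iff_mem_adjoin_X_add_X_inv ι hι,
    ← adjoin_simple_inv_add_algebraMap _ c, ← hw', mem_adjoin_simple_iff_exists_ne_zero]

end RatFunc

theorem rational_in_z_iff_rational_symmetric_in_D
    (ι : RatFunc ℚ →ₐ[ℚ] RatFunc ℚ) (hι : ι RatFunc.X = (RatFunc.X)⁻¹)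
    (w : RatFunc ℚ) (hw : w = RatFunc.X / (RatFunc.X ^ 2 + 4 * RatFunc.X + 1))
    (f : RatFunc ℚ) :
    ι f = f ↔
      ∃ P Q : Polynomial ℚ, Q ≠ 0 ∧ f = Polynomial.aeval w P / Polynomial.aeval w Q := by
  -- The statement's `ℚ`-algebra structure on `RatFunc ℚ` is `DivisionRing.toRatAlgebra`, which
  -- is not definitionally the one the `RatFunc` API is stated for.
  revert ι
  generalize (DivisionRing.toRatAlgebra : Algebra ℚ (RatFunc ℚ)) = inst
  obtain rfl := Subsingleton.elim inst (RatFunc.instAlgebraOfPolynomial ℚ ℚ)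
  intro ι hι
  exact RatFunc.apply_eq_self_iff_exists_eq_aeval_div_aeval ι hι 4 (by rw [hw, map_ofNat]) f
end

section
/- Let n ≥ 1 and let p be a surjection with domain Fin n, with reverse p̄. Then for every function ε defined on the pairs (i,j) with i < j in Fin n and taking values in Bool: the sum, over all surjections o with domain Fin n that refine p̄ and satisfy sgn(o) = ε, of (−1)^{k(o)−n}, equals 1 if ε(i,j) = (p(i) ≤ p(j)) for all i < j, and equals 0 otherwise. (This is the coefficientwise form of the identity X(p)⁻¹ = Σ_{o refines p̄} (−1)^{k(o)−n} X(o), where X(o) = Π_{i<j} X_{ij}^{+1 if o(i)>o(j), −1 otherwise}.) -/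
open scoped Classical

/-- A surjection of size `n`: a surjective function from `Fin n` onto some `Fin k`. -/
abbrev Surjs (n : ℕ) : Type :=
  {o : Σ k : Fin (n + 1), Fin n → Fin (k : ℕ) // Function.Surjective o.2}

namespace Surjs

variable {n : ℕ}

/-- The size `k(o)` of the image of the surjection. -/
def k (o : Surjs n) : ℕ := (o.1.1 : ℕ)

/-- The underlying function of the surjection. -/
def f (o : Surjs n) : Fin n → Fin o.k := o.1.2

/-- `o` refines `p` if `o x ≤ o y` implies `p x ≤ p y` for all `x, y`. -/
def Refines (o p : Surjs n) : Prop :=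
  ∀ x y : Fin n, o.f x ≤ o.f y → p.f x ≤ p.f y

/-- The reverse surjection `p̄`, given by `p̄ i = (k - 1) - p i`. -/
def rev (p : Surjs n) : Surjs n :=
  ⟨⟨p.1.1, fun i => (p.1.2 i).rev⟩, Fin.rev_involutive.surjective.comp p.2⟩

/-- The sign vector of a surjection: `sgn o i j = true` iff `o i > o j` (for `i < j`). -/
def sgn (o : Surjs n) (i j : Fin n) : Bool := decide (o.f j < o.f i)

end Surjs

/-!
For `i < j`, the value `ε i j` says which of `i`, `j` comes first when `Fin n` is sorted by the
value of `o`, ties broken by index (`Surjs.key`). So all surjections counted induce the same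
linear order on `Fin n` and differ only in how this order is cut into blocks. If some surjection
is counted and `ε` is not the sign vector of the bijection sorting by `p̄` (ties by decreasing
index), the order has two neighbours `x < y` with `p̄ x = p̄ y`; cutting or gluing between them
changes `k` by one and is an involution on the surjections counted, so the sum vanishes.
Otherwise every surjection counted is injective, hence equal to that bijection, which
contributes `1`.
-/

open Finset Function

namespace Surjs

variable {n : ℕ} {p o o' : Surjs n} {ε : Fin n → Fin n → Bool} {i j x y z : Fin n}

lemma surjective_f (o : Surjs n) : Surjective o.f := o.2

lemma exists_val_eq (o : Surjs n) {v : ℕ} (hv : v < o.k) : ∃ z, (o.f z : ℕ) = v :=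
  let ⟨z, hz⟩ := o.surjective_f ⟨v, hv⟩
  ⟨z, by rw [hz]⟩

lemma ext_val (hk : o.k = o'.k) (hf : ∀ i, (o.f i : ℕ) = o'.f i) : o = o' := by
  obtain ⟨⟨k, f⟩, hf₀⟩ := o
  obtain ⟨⟨k', f'⟩, hf₀'⟩ := o'
  obtain rfl : k = k' := Fin.ext hk
  obtain rfl : f = f' := funext fun i => Fin.ext (hf i)
  rfl

lemma eq_of_lt_iff (h : ∀ i j, o.f i < o.f j ↔ o'.f i < o'.f j) : o = o' := by
  set φ : Fin o.k → Fin o'.k := fun m => o'.f (surjInv o.surjective_f m)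
  have hφ (i : Fin n) : φ (o.f i) = o'.f i := by
    have hi := surjInv_eq o.surjective_f (o.f i)
    exact le_antisymm (not_lt.1 fun hlt => hi.not_gt ((h _ _).2 hlt))
      (not_lt.1 fun hlt => hi.not_lt ((h _ _).2 hlt))
  have hmono : StrictMono φ := fun a b hab => by
    rw [← surjInv_eq o.surjective_f a, ← surjInv_eq o.surjective_f b] at hab
    exact (h _ _).1 hab
  have hsurj : Surjective φ := fun m =>
    let ⟨i, hi⟩ := o'.surjective_f m
    ⟨o.f i, (hφ i).trans hi⟩
  let e := hmono.orderIsoOfSurjective φ hsurj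
  refine ext_val (by simpa using Fintype.card_congr e.toEquiv) fun i => ?_
  rw [← hφ i]
  exact (Fin.coe_orderIso_apply e (o.f i)).symm

section pack

variable {α : Type*} [LinearOrder α]

noncomputable def pack (g : Fin n → α) : Surjs n :=
  ⟨⟨⟨#(univ.image g), Nat.lt_succ_of_le (card_image_le.trans_eq (card_fin n))⟩,
      fun i => ((univ.image g).orderIsoOfFin rfl).symm ⟨g i, mem_image_of_mem g (mem_univ i)⟩⟩,
    fun m => by
      obtain ⟨i, -, hi⟩ := mem_image.1 ((univ.image g).orderIsoOfFin rfl m).2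
      exact ⟨i, (OrderIso.symm_apply_eq _).2 (Subtype.ext hi)⟩⟩

lemma k_pack (g : Fin n → α) : (pack g).k = #(univ.image g) := rfl

lemma pack_lt_pack_iff {g : Fin n → α} {i j : Fin n} :
    (pack g).f i < (pack g).f j ↔ g i < g j :=
  OrderIso.lt_iff_lt _

lemma pack_le_pack_iff {g : Fin n → α} {i j : Fin n} :
    (pack g).f i ≤ (pack g).f j ↔ g i ≤ g j :=
  OrderIso.le_iff_le _

lemma pack_spec {g : Fin n → ℕ} {m : ℕ} (hlt : ∀ i, g i < m) (hhit : ∀ v < m, ∃ i, g i = v) :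
    (pack g).k = m ∧ ∀ i, ((pack g).f i : ℕ) = g i := by
  have himage : univ.image g = range m := by
    ext v
    simpa using ⟨fun ⟨i, hi⟩ => hi ▸ hlt i, hhit v⟩
  have hk : (pack g).k = m := by rw [k_pack, himage, card_range]
  refine ⟨hk, fun i => ?_⟩
  have hemb : ((univ.image g).orderEmbOfFin rfl : Fin (pack g).k → ℕ) = Fin.val :=
    (orderEmbOfFin_unique rfl (fun t => by simpa [himage, ← hk] using t.2)
      Fin.val_strictMono).symm
  have := congrArg Subtype.val
    (((univ.image g).orderIsoOfFin rfl).apply_symm_apply ⟨g i, mem_image_of_mem g (mem_univ i)⟩)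
  rw [coe_orderIsoOfFin_apply, hemb] at this
  exact this

end pack

def key (o : Surjs n) (i : Fin n) : ℕ ×ₗ Fin n := toLex ((o.f i : ℕ), i)

lemma key_lt_key_iff : o.key i < o.key j ↔ (o.f i : ℕ) < o.f j ∨ (o.f i : ℕ) = o.f j ∧ i < j :=
  Prod.Lex.toLex_lt_toLex

lemma key_injective (o : Surjs n) : Injective o.key := fun _ _ h =>
  congrArg (fun q => (ofLex q).2) h

lemma val_le_val_of_key_le (h : o.key i ≤ o.key j) : (o.f i : ℕ) ≤ o.f j := by
  rcases Prod.Lex.toLex_le_toLex.1 h with h | ⟨h, -⟩ <;> omega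

lemma key_lt_key_of_val_lt (h : (o.f i : ℕ) < o.f j) : o.key i < o.key j :=
  key_lt_key_iff.2 (Or.inl h)

lemma key_lt_key_or_val_le (o : Surjs n) (x z : Fin n) :
    o.key x < o.key z ∧ (o.f x : ℕ) ≤ o.f z ∨ ¬ o.key x < o.key z ∧ (o.f z : ℕ) ≤ o.f x := by
  by_cases h : o.key x < o.key z
  · exact Or.inl ⟨h, val_le_val_of_key_le h.le⟩
  · exact Or.inr ⟨h, val_le_val_of_key_le (not_lt.1 h)⟩

lemma key_lt_key_iff_of_imp (h : ∀ i j, o.key i < o.key j → o'.key i < o'.key j) :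
    o'.key i < o'.key j ↔ o.key i < o.key j := by
  refine ⟨fun h' => ?_, h i j⟩
  have hij : i ≠ j := by rintro rfl; exact lt_irrefl _ h'
  exact (lt_or_gt_of_ne (o.key_injective.ne hij)).resolve_right fun h'' => lt_asymm h' (h j i h'')

def Adjacent (o : Surjs n) (x y : Fin n) : Prop :=
  o.key x < o.key y ∧ ∀ z, o.key x < o.key z → ¬ o.key z < o.key y

lemma Adjacent.of_key_lt_iff (h : Adjacent o x y)
    (hkey : ∀ i j, o'.key i < o'.key j ↔ o.key i < o.key j) : Adjacent o' x y :=
  ⟨(hkey x y).2 h.1, fun z h₁ h₂ => h.2 z ((hkey x z).1 h₁) ((hkey z y).1 h₂)⟩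

lemma Adjacent.val_eq_succ (h : Adjacent o x y) (hne : o.f x ≠ o.f y) :
    (o.f y : ℕ) = o.f x + 1 := by
  have hle := val_le_val_of_key_le h.1.le
  have hne' : (o.f x : ℕ) ≠ o.f y := fun h' => hne (Fin.ext h')
  by_contra! hne''
  obtain ⟨z, hz⟩ := o.exists_val_eq (v := o.f x + 1) (by have := (o.f y).2; omega)
  exact h.2 z (key_lt_key_of_val_lt (by omega)) (key_lt_key_of_val_lt (by omega))

lemma Adjacent.val_le_of_key_lt (h : Adjacent o x y) (hz : o.key x < o.key z) :
    (o.f y : ℕ) ≤ o.f z :=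
  val_le_val_of_key_le (not_lt.1 (h.2 z hz))

lemma Adjacent.lt_of_val_eq (h : Adjacent o x y) (hxy : x < y) (hne : o.f x ≠ o.f y)
    (hi : o.f i = o.f x) (hj : o.f j = o.f y) : i < j := by
  have hy := h.val_eq_succ hne
  have hix : i ≤ x := not_lt.1 fun hxi => h.2 i (key_lt_key_iff.2 (Or.inr ⟨by rw [hi], hxi⟩))
    (key_lt_key_of_val_lt (by rw [hi]; omega))
  have hyj : y ≤ j := not_lt.1 fun hjy => h.2 j (key_lt_key_of_val_lt (by rw [hj]; omega))
    (key_lt_key_iff.2 (Or.inr ⟨by rw [hj], hjy⟩))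
  exact hix.trans_lt (hxy.trans_le hyj)

noncomputable def splitAfter (o : Surjs n) (x : Fin n) : Surjs n :=
  pack fun z => (o.f z : ℕ) + if o.key x < o.key z then 1 else 0

noncomputable def mergeAbove (o : Surjs n) (m : ℕ) : Surjs n :=
  pack fun z => (o.f z : ℕ) - if m < o.f z then 1 else 0

lemma splitAfter_spec (hxy : o.key x < o.key y) (hy : o.f y = o.f x) :
    (o.splitAfter x).k = o.k + 1 ∧
      ∀ z, ((o.splitAfter x).f z : ℕ) = o.f z + if o.key x < o.key z then 1 else 0 := by
  refine pack_spec (fun z => by have := (o.f z).2; split_ifs <;> omega) fun v hv => ?_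
  rcases lt_trichotomy v (o.f x) with hlt | rfl | hgt
  · obtain ⟨z, hz⟩ := o.exists_val_eq (v := v) (by have := (o.f x).2; omega)
    refine ⟨z, ?_⟩
    rcases o.key_lt_key_or_val_le x z with ⟨h, h'⟩ | ⟨h, -⟩ <;>
      simp only [h, if_true, if_false] <;> omega
  · exact ⟨x, by simp⟩
  · obtain ⟨z, hz⟩ := o.exists_val_eq (v := v - 1) (by omega)
    by_cases hv : v - 1 = o.f x
    · exact ⟨y, by simp only [hxy, if_true, hy]; omega⟩
    · have hxz : o.key x < o.key z := key_lt_key_of_val_lt (by omega)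
      exact ⟨z, by simp only [hxz, if_true]; omega⟩

lemma mergeAbove_spec {m : ℕ} (hm : m + 1 < o.k) :
    (o.mergeAbove m).k = o.k - 1 ∧
      ∀ z, ((o.mergeAbove m).f z : ℕ) = o.f z - if m < o.f z then 1 else 0 := by
  refine pack_spec (fun z => by have := (o.f z).2; split_ifs <;> omega) fun v hv => ?_
  by_cases hvm : v ≤ m
  · obtain ⟨z, hz⟩ := o.exists_val_eq (v := v) (by omega)
    exact ⟨z, by simp only [show ¬ m < (o.f z : ℕ) by omega, if_false]; omega⟩
  · obtain ⟨z, hz⟩ := o.exists_val_eq (v := v + 1) (by omega)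
    exact ⟨z, by simp only [show m < (o.f z : ℕ) by omega, if_true]; omega⟩

lemma key_lt_key_splitAfter_iff (hxy : o.key x < o.key y) (hy : o.f y = o.f x) :
    (o.splitAfter x).key i < (o.splitAfter x).key j ↔ o.key i < o.key j := by
  refine key_lt_key_iff_of_imp fun i j hij => ?_
  have hx : o.key x < o.key i → o.key x < o.key j := fun h => h.trans hij
  obtain ⟨-, hval⟩ := splitAfter_spec hxy hy
  rw [key_lt_key_iff] at hij ⊢
  rw [hval, hval]
  split_ifs with hi hj hj <;> first | omega | exact absurd (hx hi) hj

lemma key_lt_key_mergeAbove_iff {m : ℕ} (hm : m + 1 < o.k)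
    (hsep : ∀ i j, (o.f i : ℕ) = m → (o.f j : ℕ) = m + 1 → i < j) :
    (o.mergeAbove m).key i < (o.mergeAbove m).key j ↔ o.key i < o.key j := by
  refine key_lt_key_iff_of_imp fun i j hij => ?_
  obtain ⟨-, hval⟩ := mergeAbove_spec hm
  rw [key_lt_key_iff] at hij ⊢
  rw [hval, hval]
  by_cases hij' : (o.f i : ℕ) = m ∧ (o.f j : ℕ) = m + 1
  · exact Or.inr ⟨by split_ifs <;> omega, hsep i j hij'.1 hij'.2⟩
  · split_ifs <;> omega

noncomputable def toggleAt (x y : Fin n) (o : Surjs n) : Surjs n :=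
  if o.f x = o.f y then o.splitAfter x else o.mergeAbove (o.f x)

lemma toggleAt_of_eq (htie : o.f x = o.f y) : toggleAt x y o = o.splitAfter x := if_pos htie

lemma toggleAt_of_ne (htie : o.f x ≠ o.f y) : toggleAt x y o = o.mergeAbove (o.f x) :=
  if_neg htie

lemma Adjacent.succ_lt_k (h : Adjacent o x y) (htie : o.f x ≠ o.f y) :
    (o.f x : ℕ) + 1 < o.k := by
  have := (o.f y).2
  have := h.val_eq_succ htie
  omega

lemma Adjacent.key_lt_key_mergeAbove_iff (h : Adjacent o x y) (hxy : x < y)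
    (htie : o.f x ≠ o.f y) :
    (o.mergeAbove (o.f x)).key i < (o.mergeAbove (o.f x)).key j ↔ o.key i < o.key j :=
  Surjs.key_lt_key_mergeAbove_iff (h.succ_lt_k htie) fun i j hi hj =>
    h.lt_of_val_eq hxy htie (Fin.ext hi) (Fin.ext (by rw [hj, h.val_eq_succ htie]))

lemma Adjacent.key_lt_key_toggleAt_iff (h : Adjacent o x y) (hxy : x < y) :
    (toggleAt x y o).key i < (toggleAt x y o).key j ↔ o.key i < o.key j := by
  by_cases htie : o.f x = o.f y
  · rw [toggleAt_of_eq htie]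
    exact key_lt_key_splitAfter_iff h.1 htie.symm
  · rw [toggleAt_of_ne htie]
    exact h.key_lt_key_mergeAbove_iff hxy htie

lemma Adjacent.k_toggleAt (h : Adjacent o x y) :
    (toggleAt x y o).k = o.k + 1 ∨ (toggleAt x y o).k + 1 = o.k := by
  by_cases htie : o.f x = o.f y
  · rw [toggleAt_of_eq htie]
    exact Or.inl (splitAfter_spec h.1 htie.symm).1
  · rw [toggleAt_of_ne htie, (mergeAbove_spec (h.succ_lt_k htie)).1]
    have := h.succ_lt_k htie
    omega

lemma Adjacent.toggleAt_ne (h : Adjacent o x y) : toggleAt x y o ≠ o := fun he => by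
  rcases h.k_toggleAt with hk | hk <;> rw [he] at hk <;> omega

lemma Adjacent.val_eq_val_of_toggleAt (h : Adjacent o x y)
    (he : (toggleAt x y o).f i = (toggleAt x y o).f j) :
    o.f i = o.f j ∨ o.f i = o.f x ∧ o.f j = o.f y ∨ o.f i = o.f y ∧ o.f j = o.f x := by
  have he := congrArg Fin.val he
  by_cases htie : o.f x = o.f y
  · rw [toggleAt_of_eq htie] at he
    obtain ⟨-, hval⟩ := splitAfter_spec h.1 htie.symm
    rw [hval, hval] at he
    left
    apply Fin.ext
    rcases o.key_lt_key_or_val_le x i with ⟨hi, hi'⟩ | ⟨hi, hi'⟩ <;>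
      rcases o.key_lt_key_or_val_le x j with ⟨hj, hj'⟩ | ⟨hj, hj'⟩ <;>
      simp only [hi, hj, if_true, if_false] at he <;> omega
  · rw [toggleAt_of_ne htie] at he
    obtain ⟨-, hval⟩ := mergeAbove_spec (h.succ_lt_k htie)
    rw [hval, hval] at he
    have hy := h.val_eq_succ htie
    simp only [Fin.ext_iff]
    split_ifs at he <;> omega

lemma mergeAbove_splitAfter (hxy : o.key x < o.key y) (hy : o.f y = o.f x) :
    (o.splitAfter x).mergeAbove (o.f x) = o := by
  obtain ⟨hk, hval⟩ := splitAfter_spec hxy hy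
  obtain ⟨hk', hval'⟩ := mergeAbove_spec (o := o.splitAfter x) (m := o.f x)
    (by have := (o.f x).2; omega)
  refine ext_val (by omega) fun z => ?_
  rw [hval', hval]
  rcases o.key_lt_key_or_val_le x z with ⟨hz, hz'⟩ | ⟨hz, hz'⟩ <;>
    simp only [hz, if_true, if_false] <;> split_ifs <;> omega

lemma Adjacent.mergeAbove_f_eq (h : Adjacent o x y) (htie : o.f x ≠ o.f y) :
    (o.mergeAbove (o.f x)).f x = (o.mergeAbove (o.f x)).f y := by
  have hy := h.val_eq_succ htie
  apply Fin.ext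
  rw [(mergeAbove_spec (h.succ_lt_k htie)).2, (mergeAbove_spec (h.succ_lt_k htie)).2]
  split_ifs <;> omega

lemma Adjacent.splitAfter_mergeAbove (h : Adjacent o x y) (hxy : x < y) (htie : o.f x ≠ o.f y) :
    (o.mergeAbove (o.f x)).splitAfter x = o := by
  obtain ⟨hk, hval⟩ := mergeAbove_spec (h.succ_lt_k htie)
  have hkey := fun i j => h.key_lt_key_mergeAbove_iff (i := i) (j := j) hxy htie
  obtain ⟨hk', hval'⟩ := splitAfter_spec ((hkey x y).2 h.1) (h.mergeAbove_f_eq htie).symm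
  refine ext_val (by have := h.succ_lt_k htie; omega) fun z => ?_
  rw [hval', hval]
  simp only [hkey]
  rcases o.key_lt_key_or_val_le x z with ⟨hz, -⟩ | ⟨hz, hz'⟩
  · have := h.val_le_of_key_lt hz
    have := h.val_eq_succ htie
    simp only [hz, if_true]
    split_ifs <;> omega
  · simp only [hz, if_false]
    split_ifs <;> omega

lemma Adjacent.toggleAt_toggleAt (h : Adjacent o x y) (hxy : x < y) :
    toggleAt x y (toggleAt x y o) = o := by
  by_cases htie : o.f x = o.f y
  · have hval := (splitAfter_spec h.1 htie.symm).2
    have hx : ((o.splitAfter x).f x : ℕ) = o.f x := by simp [hval]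
    have hne : (o.splitAfter x).f x ≠ (o.splitAfter x).f y := fun he => by
      simpa [hval, h.1, htie] using congrArg Fin.val he
    rw [toggleAt_of_eq htie, toggleAt_of_ne hne, hx, mergeAbove_splitAfter h.1 htie.symm]
  · rw [toggleAt_of_ne htie, toggleAt_of_eq (h.mergeAbove_f_eq htie),
      h.splitAfter_mergeAbove hxy htie]

lemma rev_f_lt_rev_f : p.rev.f i < p.rev.f j ↔ p.f j < p.f i := Fin.rev_lt_rev

lemma rev_f_le_rev_f : p.rev.f i ≤ p.rev.f j ↔ p.f j ≤ p.f i := Fin.rev_le_rev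

lemma rev_f_inj : p.rev.f i = p.rev.f j ↔ p.f i = p.f j := Fin.rev_inj

-- An `abbrev`, so that `univ.filter (Admissible p ε)` is decided by the same instance as the
-- condition in the theorem.
abbrev Admissible (p : Surjs n) (ε : Fin n → Fin n → Bool) (o : Surjs n) : Prop :=
  o.Refines p.rev ∧ ∀ i j : Fin n, i < j → ε i j = o.sgn i j

lemma sgn_eq_decide_key_lt (hij : i < j) : o.sgn i j = decide (o.key j < o.key i) := by
  simp only [sgn, key_lt_key_iff, hij.not_gt, and_false, or_false]
  exact decide_eq_decide.2 Fin.lt_def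

lemma Admissible.rev_le (ho : Admissible p ε o) (h : o.key i ≤ o.key j) :
    p.rev.f i ≤ p.rev.f j :=
  ho.1 i j (Fin.le_iff_val_le_val.2 (val_le_val_of_key_le h))

lemma Admissible.rev_eq (ho : Admissible p ε o) (h : o.f i = o.f j) : p.rev.f i = p.rev.f j :=
  le_antisymm (ho.1 i j h.le) (ho.1 j i h.ge)

lemma Admissible.key_lt_key_iff (ho : Admissible p ε o) :
    o.key i < o.key j ↔ i < j ∧ ε i j = false ∨ j < i ∧ ε j i = true := by
  rcases lt_trichotomy i j with hij | rfl | hij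
  · rw [ho.2 i j hij, sgn_eq_decide_key_lt hij]
    simp [hij, hij.not_gt, (o.key_injective.ne hij.ne').le_iff_lt.symm]
  · simp
  · rw [ho.2 j i hij, sgn_eq_decide_key_lt hij]
    simp [hij, hij.not_gt]

lemma Admissible.key_lt_key_iff_key_lt (ho : Admissible p ε o) (ho' : Admissible p ε o') :
    o.key i < o.key j ↔ o'.key i < o'.key j := by
  rw [ho.key_lt_key_iff, ho'.key_lt_key_iff]

lemma Admissible.of_key_lt_iff (ho : Admissible p ε o)
    (hkey : ∀ i j, o'.key i < o'.key j ↔ o.key i < o.key j)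
    (hker : ∀ i j, o'.f i = o'.f j → p.rev.f i = p.rev.f j) : Admissible p ε o' := by
  refine ⟨fun i j hij => ?_, fun i j hij => ?_⟩
  · rcases hij.lt_or_eq with hlt | heq
    · exact ho.rev_le ((hkey i j).1 (key_lt_key_of_val_lt hlt)).le
    · exact (hker i j heq).le
  · rw [ho.2 i j hij, sgn_eq_decide_key_lt hij, sgn_eq_decide_key_lt hij, decide_eq_decide]
    exact (hkey j i).symm

lemma Admissible.toggleAt (ho : Admissible p ε o) (h : Adjacent o x y) (hxy : x < y)
    (hp : p.rev.f x = p.rev.f y) : Admissible p ε (toggleAt x y o) := by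
  refine ho.of_key_lt_iff (fun i j => h.key_lt_key_toggleAt_iff hxy) fun i j hij => ?_
  rcases h.val_eq_val_of_toggleAt hij with hij | ⟨hi, hj⟩ | ⟨hi, hj⟩
  · exact ho.rev_eq hij
  · rw [ho.rev_eq hi, ho.rev_eq hj, hp]
  · rw [ho.rev_eq hi, ho.rev_eq hj, hp]

lemma key_lt_key_iff_of_injective (h : Injective o.f) : o.key i < o.key j ↔ o.f i < o.f j := by
  rw [key_lt_key_iff, Fin.lt_def (a := o.f i)]
  exact or_iff_left fun ⟨hij, hlt⟩ => hlt.ne (h (Fin.ext hij))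

lemma Admissible.injective (ho : Admissible p ε o)
    (hε : ∀ i j, i < j → ε i j = decide (p.f i ≤ p.f j)) : Injective o.f := by
  intro a b hab
  by_contra hne
  wlog hlt : a < b generalizing a b
  · exact this hab.symm (Ne.symm hne) (lt_of_le_of_ne (not_lt.1 hlt) (Ne.symm hne))
  have hsgn := (ho.2 a b hlt).symm.trans (hε a b hlt)
  have hp : p.f a = p.f b := rev_f_inj.1 (ho.rev_eq hab)
  simp [sgn, hab, hp] at hsgn

lemma Admissible.eq_of_injective (ho : Admissible p ε o) (ho' : Admissible p ε o')
    (h : Injective o.f) (h' : Injective o'.f) : o = o' :=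
  eq_of_lt_iff fun i j => by
    rw [← key_lt_key_iff_of_injective h, ← key_lt_key_iff_of_injective h',
      ho.key_lt_key_iff_key_lt ho']

noncomputable def canonical (p : Surjs n) : Surjs n :=
  pack fun z => toLex (p.rev.f z, OrderDual.toDual z)

lemma k_canonical (p : Surjs n) : (canonical p).k = n := by
  rw [canonical, k_pack, card_image_of_injective _ fun a b h => by
    simpa using congrArg (fun q => (ofLex q).2) h, card_univ, Fintype.card_fin]

lemma admissible_canonical (hε : ∀ i j, i < j → ε i j = decide (p.f i ≤ p.f j)) :
    Admissible p ε (canonical p) := by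
  refine ⟨fun i j hij => ?_, fun i j hij => ?_⟩
  · rw [canonical, pack_le_pack_iff, Prod.Lex.toLex_le_toLex] at hij
    rcases hij with h | ⟨h, -⟩
    · exact h.le
    · exact h.le
  · rw [hε i j hij, sgn, decide_eq_decide, canonical, pack_lt_pack_iff,
      Prod.Lex.toLex_lt_toLex]
    simp only [rev_f_lt_rev_f, rev_f_inj, OrderDual.toDual_lt_toDual, hij, and_true,
      le_iff_lt_or_eq, eq_comm]

lemma exists_adjacent {β : Type*} [PartialOrder β] (c : Fin n → β)
    (hc : ∀ i j, o.key i < o.key j → c i ≤ c j)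
    (h : ∃ i j, i < j ∧ c i = c j ∧ o.key i < o.key j) :
    ∃ x y, x < y ∧ c x = c y ∧ Adjacent o x y := by
  obtain ⟨⟨x, y⟩, hS, hmin⟩ := (univ.filter fun q : Fin n × Fin n =>
      q.1 < q.2 ∧ c q.1 = c q.2 ∧ o.key q.1 < o.key q.2).exists_min_image
    (fun q => toLex (o.key q.2, OrderDual.toDual (o.key q.1)))
    (let ⟨i, j, hij⟩ := h; ⟨(i, j), mem_filter.2 ⟨mem_univ _, hij⟩⟩)
  simp only [mem_filter, mem_univ, true_and, Prod.forall] at hS hmin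
  obtain ⟨hxy, hcxy, hkey⟩ := hS
  refine ⟨x, y, hxy, hcxy, hkey, fun z hxz hzy => ?_⟩
  -- such a `z` would make `(x, z)` or `(z, y)` a smaller pair
  have hcz : c z = c x := le_antisymm (hcxy ▸ hc z y hzy) (hc x z hxz)
  rcases lt_or_gt_of_ne (fun hzx : x = z => hxz.ne (congrArg o.key hzx)) with hlt | hgt
  · exact (hmin x z ⟨hlt, hcz.symm, hxz⟩).not_gt (Prod.Lex.toLex_lt_toLex.2 (Or.inl hzy))
  · exact (hmin z y ⟨hgt.trans hxy, hcz.trans hcxy, hzy⟩).not_gt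
      (Prod.Lex.toLex_lt_toLex.2 (Or.inr ⟨rfl, OrderDual.toDual_lt_toDual.2 hxz⟩))

lemma Admissible.exists_key_lt (ho : Admissible p ε o)
    (hε : ¬ ∀ i j, i < j → ε i j = decide (p.f i ≤ p.f j)) :
    ∃ i j, i < j ∧ p.rev.f i = p.rev.f j ∧ o.key i < o.key j := by
  push Not at hε
  obtain ⟨i, j, hij, hne⟩ := hε
  cases hεij : ε i j
  · have hlt : o.key i < o.key j := ho.key_lt_key_iff.2 (Or.inl ⟨hij, hεij⟩)
    have hp : p.f i ≤ p.f j := by simpa [hεij] using hne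
    exact ⟨i, j, hij, le_antisymm (ho.rev_le hlt.le) (rev_f_le_rev_f.2 hp), hlt⟩
  · have hlt : o.key j < o.key i := ho.key_lt_key_iff.2 (Or.inr ⟨hij, hεij⟩)
    have hp : p.f j < p.f i := by simpa [hεij] using hne
    exact absurd (ho.rev_le hlt.le) (not_le.2 (rev_f_lt_rev_f.2 hp))

lemma neg_one_zpow_add_one_add_self {R : Type*} [DivisionRing R] (m : ℤ) :
    (-1 : R) ^ (m + 1) + (-1) ^ m = 0 := by
  rw [zpow_add_one₀ (neg_ne_zero.2 one_ne_zero), mul_neg_one, neg_add_cancel]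

section sum

variable {R : Type*} [DivisionRing R]

lemma sum_admissible_of_forall (hε : ∀ i j, i < j → ε i j = decide (p.f i ≤ p.f j)) :
    ∑ o ∈ univ.filter (Admissible p ε), (-1 : R) ^ ((o.k : ℤ) - n) = 1 := by
  have hcan := admissible_canonical hε
  have hfilter : univ.filter (Admissible p ε) = {canonical p} := by
    refine eq_singleton_iff_unique_mem.2 ⟨mem_filter.2 ⟨mem_univ _, hcan⟩, fun o ho => ?_⟩
    have ho := (mem_filter.1 ho).2
    exact ho.eq_of_injective hcan (ho.injective hε) (hcan.injective hε)
  rw [hfilter, sum_singleton, k_canonical, sub_self, zpow_zero]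

lemma sum_admissible_of_not_forall
    (hε : ¬ ∀ i j, i < j → ε i j = decide (p.f i ≤ p.f j)) :
    ∑ o ∈ univ.filter (Admissible p ε), (-1 : R) ^ ((o.k : ℤ) - n) = 0 := by
  rcases (univ.filter (Admissible p ε)).eq_empty_or_nonempty with hempty | ⟨o₀, ho₀⟩
  · rw [hempty, sum_empty]
  replace ho₀ := (mem_filter.1 ho₀).2
  obtain ⟨x, y, hxy, hp, hadj₀⟩ :=
    exists_adjacent p.rev.f (fun i j h => ho₀.rev_le h.le) (ho₀.exists_key_lt hε)
  have hadj (o) (ho : o ∈ univ.filter (Admissible p ε)) : Adjacent o x y :=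
    hadj₀.of_key_lt_iff fun i j => (mem_filter.1 ho).2.key_lt_key_iff_key_lt ho₀
  refine sum_involution (fun o _ => toggleAt x y o) (fun o ho => ?_)
    (fun o ho _ => (hadj o ho).toggleAt_ne)
    (fun o ho => mem_filter.2 ⟨mem_univ _, (mem_filter.1 ho).2.toggleAt (hadj o ho) hxy hp⟩)
    (fun o ho => (hadj o ho).toggleAt_toggleAt hxy)
  rcases (hadj o ho).k_toggleAt with hk | hk
  · rw [hk, add_comm]
    push_cast
    rw [add_sub_right_comm, neg_one_zpow_add_one_add_self]
  · rw [← hk]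
    push_cast
    rw [add_sub_right_comm, neg_one_zpow_add_one_add_self]

end sum

end Surjs

theorem reverse_monomial_as_alternating_sum_general (n : ℕ) (p : Surjs n)
    (ε : Fin n → Fin n → Bool) :
    (∑ o : Surjs n,
        if o.Refines p.rev ∧ (∀ i j : Fin n, i < j → ε i j = o.sgn i j) then
          ((-1 : ℚ) ^ ((o.k : ℤ) - (n : ℤ))) else 0) =
      if ∀ i j : Fin n, i < j → ε i j = decide (p.f i ≤ p.f j) then 1 else 0 := by
  rw [← sum_filter]
  split_ifs with hε
  · exact Surjs.sum_admissible_of_forall hε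
  · exact Surjs.sum_admissible_of_not_forall hε

/-- Coefficientwise form of `X(p)⁻¹ = Σ_{o refines p̄} (−1)^{k(o)−n} X(o)`. -/
theorem reverse_monomial_as_alternating_sum (n : ℕ) (hn : 1 ≤ n) (p : Surjs n)
    (ε : Fin n → Fin n → Bool) :
    (∑ o : Surjs n,
        if o.Refines p.rev ∧ (∀ i j : Fin n, i < j → ε i j = o.sgn i j) then
          ((-1 : ℚ) ^ ((o.k : ℤ) - (n : ℤ))) else 0) =
      if ∀ i j : Fin n, i < j → ε i j = decide (p.f i ≤ p.f j) then 1 else 0 :=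
  reverse_monomial_as_alternating_sum_general n p ε
end

section
/- Let n ≥ 1 and let p be a surjection with domain Fin n. Then for every function ε defined on the pairs (i,j) with i < j in Fin n and taking values in Bool: the sum, over all surjections o with domain Fin n that refine p and satisfy sgn(o) = ε, of (−1)^{k(o)}, equals (−1)^n if ε = sgn(r(p)), and equals 0 otherwise. (This is the coefficientwise form of the identity Σ_{o refines p} (−1)^{k(o)} X(o) = (−1)^n X(r(p)).) -/
open scoped Classical

namespace Surjs

variable {n : ℕ}

/-- The canonical permutation `r(p)` of a surjection `p`, with values in `{1, …, n}`:
`r(p)(i) = #{j : p j < p i} + #{j : j ≥ i and p j = p i}`. -/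
def canonPerm (p : Surjs n) (i : Fin n) : ℕ :=
  (Finset.univ.filter fun j => p.f j < p.f i).card +
    (Finset.univ.filter fun j => i ≤ j ∧ p.f j = p.f i).card

end Surjs

namespace SurjAux
open Finset Surjs

variable {n : ℕ}

/-- value of a surjection as a natural number -/
def fo (o : Surjs n) (i : Fin n) : ℕ := (o.f i : ℕ)

lemma fo_lt_k (o : Surjs n) (i : Fin n) : fo o i < o.k := (o.f i).isLt

lemma fo_surj (o : Surjs n) : ∀ v, v < o.k → ∃ i, fo o i = v := by
  intro v hv
  obtain ⟨i, hi⟩ := o.2 ⟨v, hv⟩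
  exact ⟨i, congrArg Fin.val hi⟩

lemma k_pos (o : Surjs n) (hn : 1 ≤ n) : 1 ≤ o.k := by
  have := fo_lt_k o ⟨0, hn⟩; omega

/-- extensionality for surjections -/
lemma surj_ext {o o' : Surjs n} (hk : o.k = o'.k) (hf : ∀ i, fo o i = fo o' i) : o = o' := by
  obtain ⟨⟨k1, f1⟩, h1⟩ := o
  obtain ⟨⟨k2, f2⟩, h2⟩ := o'
  have hk' : k1 = k2 := Fin.ext hk
  subst hk'
  have hf' : f1 = f2 := funext fun i => Fin.ext (hf i)
  subst hf'
  rfl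

/-- constructor -/
def mkSurj (k₀ : ℕ) (hk : k₀ ≤ n) (g : Fin n → ℕ) (hg : ∀ i, g i < k₀)
    (hs : ∀ v, v < k₀ → ∃ i, g i = v) : Surjs n :=
  ⟨⟨⟨k₀, by omega⟩, fun i => ⟨g i, hg i⟩⟩, by
    rintro ⟨v, hv⟩
    obtain ⟨i, hi⟩ := hs v hv
    exact ⟨i, Fin.ext hi⟩⟩

lemma mkSurj_k (k₀ : ℕ) (hk : k₀ ≤ n) (g : Fin n → ℕ) (hg : ∀ i, g i < k₀)
    (hs : ∀ v, v < k₀ → ∃ i, g i = v) : (mkSurj k₀ hk g hg hs).k = k₀ := rfl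

lemma mkSurj_fo (k₀ : ℕ) (hk : k₀ ≤ n) (g : Fin n → ℕ) (hg : ∀ i, g i < k₀)
    (hs : ∀ v, v < k₀ → ∃ i, g i = v) : ∀ i, fo (mkSurj k₀ hk g hg hs) i = g i :=
  fun _ => rfl

end SurjAux

namespace SurjAux
open Finset Surjs
variable {n : ℕ}

structure TieOrder (tie : Fin n → Fin n → Prop) : Prop where
  irrefl : ∀ i, ¬ tie i i
  trans : ∀ {i j l}, tie i j → tie j l → tie i l
  total : ∀ i j, i ≠ j → tie i j ∨ tie j i

lemma tieOrder_lt : TieOrder (fun i j : Fin n => i < j) :=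
  ⟨fun i => lt_irrefl i, fun h h' => lt_trans h h', fun i j h => h.lt_or_gt⟩

lemma tieOrder_gt : TieOrder (fun i j : Fin n => j < i) :=
  ⟨fun i => lt_irrefl i, fun h h' => lt_trans h' h, fun i j h => h.symm.lt_or_gt⟩

/-- rank of `i` under `f` with ties broken by `tie` -/
noncomputable def rk (f : Fin n → ℕ) (tie : Fin n → Fin n → Prop) (i : Fin n) : ℕ :=
  (univ.filter fun j => f j < f i ∨ (f j = f i ∧ tie j i)).card

variable {f : Fin n → ℕ} {tie : Fin n → Fin n → Prop}

lemma rk_strict (ht : TieOrder tie) {i j : Fin n}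
    (h : f i < f j ∨ (f i = f j ∧ tie i j)) : rk f tie i < rk f tie j := by
  apply card_lt_card
  constructor
  · intro x hx
    simp only [mem_filter, mem_univ, true_and] at hx ⊢
    rcases h with h | ⟨he, htij⟩
    · rcases hx with hx | ⟨hx, _⟩
      · exact Or.inl (hx.trans h)
      · exact Or.inl (hx ▸ h)
    · rcases hx with hx | ⟨hx, hxt⟩
      · exact Or.inl (he ▸ hx)
      · exact Or.inr ⟨hx.trans he, ht.trans hxt htij⟩
  · intro hsub
    have hi : i ∈ univ.filter fun x => f x < f j ∨ (f x = f j ∧ tie x j) := by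
      simp only [mem_filter, mem_univ, true_and]
      rcases h with h | ⟨he, htij⟩
      · exact Or.inl h
      · exact Or.inr ⟨he, htij⟩
    have h2 := (mem_filter.mp (hsub hi)).2
    rcases h2 with h' | ⟨_, h'⟩
    · exact lt_irrefl _ h'
    · exact ht.irrefl i h'

lemma rk_lt (ht : TieOrder tie) (i : Fin n) : rk f tie i < n := by
  unfold rk
  have hsub : (univ.filter fun j => f j < f i ∨ (f j = f i ∧ tie j i)) ⊆ univ.erase i := by
    intro x hx
    rw [mem_erase]
    refine ⟨?_, mem_univ x⟩
    rintro rfl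
    rcases (mem_filter.mp hx).2 with h' | ⟨_, h'⟩
    · exact lt_irrefl _ h'
    · exact ht.irrefl x h'
  have := card_le_card hsub
  rw [card_erase_of_mem (mem_univ i)] at this
  have hn : 0 < n := i.pos
  simp only [card_univ, Fintype.card_fin] at this
  omega

lemma rk_inj (ht : TieOrder tie) {i j : Fin n} (h : rk f tie i = rk f tie j) : i = j := by
  by_contra hne
  rcases lt_trichotomy (f i) (f j) with hf | hf | hf
  · exact absurd h (Nat.ne_of_lt (rk_strict ht (Or.inl hf)))
  · rcases ht.total i j hne with htie | htie
    · exact absurd h (Nat.ne_of_lt (rk_strict ht (Or.inr ⟨hf, htie⟩)))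
    · exact absurd h.symm (Nat.ne_of_lt (rk_strict ht (Or.inr ⟨hf.symm, htie⟩)))
  · exact absurd h.symm (Nat.ne_of_lt (rk_strict ht (Or.inl hf)))

lemma rk_le (ht : TieOrder tie) {i j : Fin n} (h : rk f tie i ≤ rk f tie j) : f i ≤ f j := by
  by_contra hc
  push_neg at hc
  exact absurd h (Nat.not_le.mpr (rk_strict ht (Or.inl hc)))

lemma rk_surj (ht : TieOrder tie) : ∀ v, v < n → ∃ i, rk f tie i = v := by
  intro v hv
  have hbij : Function.Bijective (fun i : Fin n => (⟨rk f tie i, rk_lt ht i⟩ : Fin n)) := by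
    rw [Fintype.bijective_iff_injective_and_card]
    exact ⟨fun i j h => rk_inj ht (congrArg Fin.val h), rfl⟩
  obtain ⟨i, hi⟩ := hbij.2 ⟨v, hv⟩
  exact ⟨i, congrArg Fin.val hi⟩

end SurjAux
namespace SurjAux
open Finset Surjs
variable {n : ℕ} {ε : Fin n → Fin n → Bool}

structure Good (σ : Fin n → ℕ) : Prop where
  inj : ∀ {i j}, σ i = σ j → i = j
  lt : ∀ i, σ i < n
  surj : ∀ v, v < n → ∃ i, σ i = v

def Sig (o : Surjs n) (σ : Fin n → ℕ) : Prop :=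
  ∀ i j, (fo o i < fo o j ∨ (fo o i = fo o j ∧ i < j)) ↔ σ i < σ j

lemma good_rk {f : Fin n → ℕ} {tie : Fin n → Fin n → Prop} (ht : TieOrder tie) :
    Good (rk f tie) :=
  ⟨fun h => rk_inj ht h, rk_lt ht, rk_surj ht⟩

lemma sig_rk (o : Surjs n) : Sig o (rk (fo o) (fun i j => i < j)) := by
  intro i j
  constructor
  · exact fun h => rk_strict tieOrder_lt h
  · intro h
    rcases lt_trichotomy (fo o i) (fo o j) with hf | hf | hf
    · exact Or.inl hf
    · rcases lt_trichotomy i j with hij | hij | hij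
      · exact Or.inr ⟨hf, hij⟩
      · subst hij; omega
      · have := rk_strict (f := fo o) tieOrder_lt (Or.inr ⟨hf.symm, hij⟩); omega
    · have := rk_strict (f := fo o) tieOrder_lt (Or.inl hf); omega

lemma cond_eps {o : Surjs n} (hε : ∀ i j, i < j → ε i j = o.sgn i j) (i j : Fin n) :
    (fo o i < fo o j ∨ (fo o i = fo o j ∧ i < j)) ↔
      ((i < j ∧ ε i j = false) ∨ (j < i ∧ ε j i = true)) := by
  have hsgn : ∀ a b : Fin n, (o.sgn a b = true) ↔ fo o b < fo o a := by
    intro a b; rw [sgn, decide_eq_true_eq, Fin.lt_def]; exact Iff.rfl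
  rcases lt_trichotomy i j with hij | hij | hij
  · rw [hε i j hij]
    constructor
    · intro h
      refine Or.inl ⟨hij, ?_⟩
      rw [Bool.eq_false_iff]
      intro hc
      have := (hsgn i j).mp hc
      omega
    · rintro (⟨_, h⟩ | ⟨h, _⟩)
      · have : ¬ o.sgn i j = true := by rw [h]; simp
        rw [hsgn i j] at this
        rcases Nat.lt_or_ge (fo o i) (fo o j) with h' | h'
        · exact Or.inl h'
        · exact Or.inr ⟨by omega, hij⟩
      · exact absurd hij (not_lt.mpr (le_of_lt h))
  · subst hij
    simp [lt_irrefl]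
  · rw [hε j i hij]
    constructor
    · rintro (h | ⟨_, h⟩)
      · exact Or.inr ⟨hij, (hsgn j i).mpr h⟩
      · exact absurd h (not_lt.mpr (le_of_lt hij))
    · rintro (⟨h, _⟩ | ⟨_, h⟩)
      · exact absurd h (not_lt.mpr (le_of_lt hij))
      · exact Or.inl ((hsgn j i).mp h)

lemma sig_congr {o o' : Surjs n} (hε : ∀ i j, i < j → ε i j = o.sgn i j)
    (hε' : ∀ i j, i < j → ε i j = o'.sgn i j) {σ : Fin n → ℕ} (hs : Sig o σ) : Sig o' σ :=
  fun i j => ((cond_eps hε' i j).trans (cond_eps hε i j).symm).trans (hs i j)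

variable {σ : Fin n → ℕ} {o : Surjs n}

lemma sig_mono (hs : Sig o σ) {i j : Fin n} (h : σ i ≤ σ j) : fo o i ≤ fo o j := by
  by_contra hc
  push_neg at hc
  have := (hs j i).mp (Or.inl hc)
  omega

lemma sig_step (hs : Sig o σ) {i j : Fin n} (h : σ j = σ i + 1) : fo o j ≤ fo o i + 1 := by
  by_contra hc
  push_neg at hc
  obtain ⟨x, hx⟩ := fo_surj o (fo o i + 1) (lt_trans (by omega) (fo_lt_k o j))
  have h1 := (hs i x).mp (Or.inl (by omega))
  have h2 := (hs x j).mp (Or.inl (by omega))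
  omega

lemma sig_bot (hs : Sig o σ) {i : Fin n} (h : σ i = 0) : fo o i = 0 := by
  by_contra hc
  obtain ⟨x, hx⟩ := fo_surj o 0 (lt_of_le_of_lt (Nat.zero_le _) (fo_lt_k o i))
  have := (hs x i).mp (Or.inl (by omega))
  omega

lemma sig_top (G : Good σ) (hs : Sig o σ) {i : Fin n} (h : σ i = n - 1) :
    fo o i + 1 = o.k := by
  have hk := fo_lt_k o i
  by_contra hc
  obtain ⟨x, hx⟩ := fo_surj o (fo o i + 1) (by omega)
  have h1 := (hs i x).mp (Or.inl (by omega))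
  have h2 := G.lt x
  have h3 := G.lt i
  omega

noncomputable def SOf (σ : Fin n → ℕ) (o : Surjs n) : Finset ℕ :=
  (range (n-1)).filter fun a => ∃ i j, σ i = a ∧ σ j = a+1 ∧ fo o i = fo o j

noncomputable def AOf (σ : Fin n → ℕ) (p : Surjs n) : Finset ℕ :=
  (range (n-1)).filter fun a => ∃ i j : Fin n, σ i = a ∧ σ j = a+1 ∧ i < j ∧ p.f i = p.f j

lemma AOf_subset_range (p : Surjs n) : AOf σ p ⊆ range (n-1) := filter_subset _ _

lemma fo_add_card (G : Good σ) (hs : Sig o σ) :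
    ∀ v, v < n → ∀ i, σ i = v → fo o i + ((SOf σ o).filter (· < v)).card = v := by
  intro v
  induction v with
  | zero =>
    intro _ i hi
    rw [sig_bot hs hi]
    simp
  | succ v ih =>
    intro hv i hi
    obtain ⟨i', hi'⟩ := G.surj v (by omega)
    have hle : fo o i' ≤ fo o i := sig_mono hs (by omega)
    have hstep : fo o i ≤ fo o i' + 1 := sig_step hs (by omega)
    have ihv := ih (by omega) i' hi'
    by_cases hcase : fo o i = fo o i'
    · have hvS : v ∈ SOf σ o := by
        rw [SOf, mem_filter, mem_range]
        exact ⟨by omega, i', i, hi', by omega, hcase.symm⟩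
      have hins : (SOf σ o).filter (· < v+1) = insert v ((SOf σ o).filter (· < v)) := by
        ext a
        simp only [mem_filter, mem_insert]
        constructor
        · rintro ⟨h1, h2⟩
          rcases Nat.lt_or_ge a v with h | h
          · exact Or.inr ⟨h1, h⟩
          · exact Or.inl (by omega)
        · rintro (rfl | ⟨h1, h2⟩)
          · exact ⟨hvS, by omega⟩
          · exact ⟨h1, by omega⟩
      rw [hins, card_insert_of_notMem (by simp)]
      omega
    · have hvS : v ∉ SOf σ o := by
        intro hv'
        rw [SOf, mem_filter] at hv'
        obtain ⟨a, b, ha, hb, hab⟩ := hv'.2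
        have ha' : a = i' := G.inj (by omega)
        have hb' : b = i := G.inj (by omega)
        rw [ha', hb'] at hab
        exact hcase (by omega)
      have hsame : (SOf σ o).filter (· < v+1) = (SOf σ o).filter (· < v) := by
        ext a
        simp only [mem_filter]
        constructor
        · rintro ⟨h1, h2⟩
          refine ⟨h1, ?_⟩
          have : a ≠ v := fun h => hvS (h ▸ h1)
          omega
        · rintro ⟨h1, h2⟩
          exact ⟨h1, by omega⟩
      rw [hsame]
      omega

lemma k_card (hn : 1 ≤ n) (G : Good σ) (hs : Sig o σ) : o.k + (SOf σ o).card = n := by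
  obtain ⟨i, hi⟩ := G.surj (n-1) (by omega)
  have h1 := fo_add_card G hs (n-1) (by omega) i hi
  have h2 : (SOf σ o).filter (· < n-1) = SOf σ o :=
    filter_true_of_mem (fun a ha => mem_range.mp (mem_filter.mp ha).1)
  have h3 := sig_top G hs hi
  rw [h2] at h1
  omega

lemma SOf_subset {p : Surjs n} (G : Good σ) (hs : Sig o σ) (hr : o.Refines p) :
    SOf σ o ⊆ AOf σ p := by
  intro a ha
  rw [SOf, mem_filter] at ha
  obtain ⟨har, i, j, hi, hj, hij⟩ := ha
  have hlt : i < j := by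
    have hne : i ≠ j := fun h => by rw [h, hj] at hi; omega
    rcases lt_or_gt_of_ne hne with h | h
    · exact h
    · have := (hs j i).mp (Or.inr ⟨hij.symm, h⟩); omega
  have hfe : o.f i = o.f j := Fin.ext hij
  have hpe : p.f i = p.f j := le_antisymm (hr i j (le_of_eq hfe)) (hr j i (le_of_eq hfe.symm))
  rw [AOf, mem_filter]
  exact ⟨har, i, j, hi, hj, hlt, hpe⟩

end SurjAux
namespace SurjAux
open Finset Surjs
variable {n : ℕ} {σ : Fin n → ℕ} {S : Finset ℕ}

/-- merged value function -/
noncomputable def gg (S : Finset ℕ) (v : ℕ) : ℕ := v - (S.filter (· < v)).card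

lemma gg_card_le (S : Finset ℕ) (v : ℕ) : (S.filter (· < v)).card ≤ v := by
  have : S.filter (· < v) ⊆ range v := fun a ha => mem_range.mpr (mem_filter.mp ha).2
  simpa using card_le_card this

lemma gg_zero (S : Finset ℕ) : gg S 0 = 0 := by simp [gg]

lemma gg_step_mem (hv : v ∈ S) : gg S (v+1) = gg S v := by
  have h : S.filter (· < v+1) = insert v (S.filter (· < v)) := by
    ext a
    simp only [mem_filter, mem_insert]
    constructor
    · rintro ⟨h1, h2⟩
      rcases Nat.lt_or_ge a v with h | h
      · exact Or.inr ⟨h1, h⟩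
      · exact Or.inl (by omega)
    · rintro (rfl | ⟨h1, h2⟩)
      · exact ⟨hv, by omega⟩
      · exact ⟨h1, by omega⟩
  have hc := gg_card_le S v
  rw [gg, gg, h, card_insert_of_notMem (by simp)]
  omega

lemma gg_step_notMem (hv : v ∉ S) : gg S (v+1) = gg S v + 1 := by
  have h : S.filter (· < v+1) = S.filter (· < v) := by
    ext a
    simp only [mem_filter]
    constructor
    · rintro ⟨h1, h2⟩
      have : a ≠ v := fun h => hv (h ▸ h1)
      exact ⟨h1, by omega⟩
    · rintro ⟨h1, h2⟩
      exact ⟨h1, by omega⟩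
  have hc := gg_card_le S v
  rw [gg, gg, h]
  omega

lemma gg_step_le (S : Finset ℕ) (v : ℕ) : gg S v ≤ gg S (v+1) ∧ gg S (v+1) ≤ gg S v + 1 := by
  by_cases hv : v ∈ S
  · rw [gg_step_mem hv]; omega
  · rw [gg_step_notMem hv]; omega

lemma gg_mono (S : Finset ℕ) {v w : ℕ} (h : v ≤ w) : gg S v ≤ gg S w := by
  induction w with
  | zero =>
    have : v = 0 := by omega
    subst this
    exact le_refl _
  | succ w ih =>
    rcases Nat.lt_or_ge v (w+1) with h' | h'
    · have := ih (by omega)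
      have := (gg_step_le S w).1
      omega
    · have hv : v = w + 1 := by omega
      rw [hv]

lemma gg_const_mem (S : Finset ℕ) {v w : ℕ} (hvw : v ≤ w) (h : gg S v = gg S w) :
    ∀ u, v ≤ u → u < w → u ∈ S := by
  induction w with
  | zero => intro u _ hu; exact absurd hu (by omega)
  | succ w ih =>
    intro u hu1 hu2
    rcases Nat.lt_or_ge v (w+1) with h' | h'
    · have h1 : gg S v ≤ gg S w := gg_mono S (by omega)
      have h2 := (gg_step_le S w).1
      have hvweq : gg S v = gg S w := by omega
      rcases Nat.lt_or_ge u w with h3 | h3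
      · exact ih (by omega) hvweq u hu1 h3
      · have : u = w := by omega
        subst this
        by_contra hc
        have := gg_step_notMem hc
        omega
    · exact absurd hu2 (by omega)

lemma gg_surj (S : Finset ℕ) : ∀ m v, v ≤ gg S m → ∃ u, u ≤ m ∧ gg S u = v := by
  intro m
  induction m with
  | zero => intro v hv; exact ⟨0, le_refl 0, by rw [gg_zero] at hv ⊢; omega⟩
  | succ m ih =>
    intro v hv
    rcases le_or_gt v (gg S m) with h | h
    · obtain ⟨u, hu1, hu2⟩ := ih v h
      exact ⟨u, by omega, hu2⟩
    · have := (gg_step_le S m).2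
      exact ⟨m+1, le_refl _, by omega⟩

/-- chain lemma: a run of merged ascents in A forces increasing indices and constant p -/
lemma chainA {p : Surjs n} (G : Good σ) :
    ∀ d v, (∀ u, v ≤ u → u < v + d → u ∈ AOf σ p) →
      ∀ i j : Fin n, σ i = v → σ j = v + d → i ≤ j ∧ p.f i = p.f j := by
  intro d
  induction d with
  | zero =>
    intro v _ i j hi hj
    have : i = j := G.inj (by omega)
    subst this
    exact ⟨le_refl i, rfl⟩
  | succ d ih =>
    intro v hall i j hi hj
    have hmem : v + d ∈ AOf σ p := hall (v + d) (by omega) (by omega)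
    rw [AOf, mem_filter] at hmem
    obtain ⟨a, b, ha, hb, hab, hpab⟩ := hmem.2
    have hbj : b = j := G.inj (by omega)
    subst hbj
    obtain ⟨h1, h2⟩ := ih v (fun u hu1 hu2 => hall u hu1 (by omega)) i a hi (by omega)
    exact ⟨le_of_lt (lt_of_le_of_lt h1 hab), h2.trans hpab⟩

/-- decreasing chain: when A is empty, p-ties force decreasing indices along σ -/
lemma chainDec {p : Surjs n} (G : Good σ) (hA : AOf σ p = ∅)
    (hmono : ∀ a b : Fin n, σ a ≤ σ b → p.f a ≤ p.f b) :
    ∀ d v, ∀ i j : Fin n, σ i = v → σ j = v + d → 0 < d → p.f i = p.f j → j < i := by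
  have adj : ∀ v, ∀ i j : Fin n, σ i = v → σ j = v + 1 → p.f i = p.f j → j < i := by
    intro v i j hi hj hp
    have hne : i ≠ j := fun h => by rw [h, hj] at hi; omega
    rcases lt_or_gt_of_ne hne with h | h
    · exfalso
      have hvA : v ∈ AOf σ p := by
        rw [AOf, mem_filter, mem_range]
        have := G.lt j
        exact ⟨by omega, i, j, hi, by omega, h, hp⟩
      rw [hA] at hvA
      exact absurd hvA (notMem_empty v)
    · exact h
  intro d
  induction d with
  | zero => omega
  | succ d ih =>
    intro v i j hi hj _ hp
    rcases Nat.eq_zero_or_pos d with hd | hd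
    · subst hd
      exact adj v i j hi (by omega) hp
    · obtain ⟨m, hm⟩ := G.surj (v + d) (by have := G.lt j; omega)
      have hp1 : p.f i ≤ p.f m := hmono i m (by omega)
      have hp2 : p.f m ≤ p.f j := hmono m j (by omega)
      have hpm : p.f i = p.f m := le_antisymm hp1 (hp ▸ hp2)
      have h1 : m < i := ih v i m hi hm hd hpm
      have h2 : j < m := adj (v+d) m j hm (by omega) (hpm ▸ hp)
      exact lt_trans h2 h1

end SurjAux
namespace SurjAux
open Finset Surjs
variable {n : ℕ} {σ : Fin n → ℕ} {p : Surjs n} {S : Finset ℕ} {ε : Fin n → Fin n → Bool}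

lemma S_lt_of_subset (hSA : S ⊆ AOf σ p) : ∀ a ∈ S, a < n - 1 :=
  fun a ha => mem_range.mp (AOf_subset_range p (hSA ha))

lemma gg_top (hSA : S ⊆ AOf σ p) : gg S (n-1) = n - 1 - S.card := by
  rw [gg, filter_true_of_mem (fun a ha => S_lt_of_subset hSA a ha)]

lemma S_card_le (hSA : S ⊆ AOf σ p) : S.card ≤ n - 1 := by
  have : S ⊆ range (n-1) := fun a ha => mem_range.mpr (S_lt_of_subset hSA a ha)
  simpa using card_le_card this

lemma merge_bound (hn : 1 ≤ n) (G : Good σ) (hSA : S ⊆ AOf σ p) (i : Fin n) :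
    gg S (σ i) < n - S.card := by
  have h1 : gg S (σ i) ≤ gg S (n-1) := gg_mono S (by have := G.lt i; omega)
  have h2 := gg_top hSA
  have h3 := S_card_le hSA
  omega

lemma merge_surj (hn : 1 ≤ n) (G : Good σ) (hSA : S ⊆ AOf σ p) :
    ∀ v, v < n - S.card → ∃ i, gg S (σ i) = v := by
  intro v hv
  have h2 := gg_top hSA
  have h3 := S_card_le hSA
  obtain ⟨u, hu1, hu2⟩ := gg_surj S (n-1) v (by omega)
  obtain ⟨i, hi⟩ := G.surj u (by omega)
  exact ⟨i, by rw [hi, hu2]⟩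

noncomputable def mkMerge (hn : 1 ≤ n) (G : Good σ) (hSA : S ⊆ AOf σ p) : Surjs n :=
  mkSurj (n - S.card) (by omega) (fun i => gg S (σ i))
    (merge_bound hn G hSA) (merge_surj hn G hSA)

lemma mkMerge_k (hn : 1 ≤ n) (G : Good σ) (hSA : S ⊆ AOf σ p) :
    (mkMerge hn G hSA).k = n - S.card := rfl

lemma mkMerge_fo (hn : 1 ≤ n) (G : Good σ) (hSA : S ⊆ AOf σ p) (i : Fin n) :
    fo (mkMerge hn G hSA) i = gg S (σ i) := rfl

lemma merge_lt_iff (G : Good σ) (hSA : S ⊆ AOf σ p) {i j : Fin n} (hij : i < j) :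
    (gg S (σ j) < gg S (σ i)) ↔ σ j < σ i := by
  constructor
  · intro h
    by_contra hc
    push_neg at hc
    exact absurd h (not_lt.mpr (gg_mono S hc))
  · intro h
    have hle : gg S (σ j) ≤ gg S (σ i) := gg_mono S (le_of_lt h)
    rcases lt_or_eq_of_le hle with h' | h'
    · exact h'
    · exfalso
      have hmem : ∀ u, σ j ≤ u → u < σ j + (σ i - σ j) → u ∈ AOf σ p := by
        intro u h1 h2
        exact hSA (gg_const_mem S (le_of_lt h) h' u h1 (by omega))
      have := (chainA G (σ i - σ j) (σ j) hmem j i rfl (by omega)).1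
      exact absurd hij (not_lt.mpr this)

lemma mkMerge_refines (hn : 1 ≤ n) (G : Good σ) (hSA : S ⊆ AOf σ p)
    (hmono : ∀ a b : Fin n, σ a ≤ σ b → p.f a ≤ p.f b) :
    (mkMerge hn G hSA).Refines p := by
  intro x y hxy
  have hxy' : gg S (σ x) ≤ gg S (σ y) := hxy
  rcases le_or_gt (σ x) (σ y) with h | h
  · exact hmono x y h
  · have heq : gg S (σ y) = gg S (σ x) := le_antisymm (gg_mono S (le_of_lt h)) hxy'
    have hmem : ∀ u, σ y ≤ u → u < σ y + (σ x - σ y) → u ∈ AOf σ p := by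
      intro u h1 h2
      exact hSA (gg_const_mem S (le_of_lt h) heq u h1 (by omega))
    have := (chainA G (σ x - σ y) (σ y) hmem y x rfl (by omega)).2
    exact le_of_eq this.symm

lemma mkMerge_sgn (hn : 1 ≤ n) (G : Good σ) (hSA : S ⊆ AOf σ p)
    (hεσ : ∀ i j : Fin n, i < j → ε i j = decide (σ j < σ i)) :
    ∀ i j : Fin n, i < j → ε i j = (mkMerge hn G hSA).sgn i j := by
  intro i j hij
  rw [hεσ i j hij, sgn]
  apply decide_eq_decide.mpr
  rw [Fin.lt_def]
  exact (merge_lt_iff G hSA hij).symm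

lemma mkMerge_SOf (hn : 1 ≤ n) (G : Good σ) (hSA : S ⊆ AOf σ p) :
    SOf σ (mkMerge hn G hSA) = S := by
  ext a
  rw [SOf, mem_filter, mem_range]
  constructor
  · rintro ⟨har, i, j, hi, hj, hij⟩
    rw [mkMerge_fo, mkMerge_fo, hi, hj] at hij
    by_contra hc
    have := gg_step_notMem hc
    omega
  · intro ha
    have haA := hSA ha
    rw [AOf, mem_filter, mem_range] at haA
    obtain ⟨har, i, j, hi, hj, _, _⟩ := haA
    refine ⟨har, i, j, hi, hj, ?_⟩
    rw [mkMerge_fo, mkMerge_fo, hi, hj, gg_step_mem ha]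

end SurjAux
namespace SurjAux
open Finset Surjs
variable {n : ℕ} {p : Surjs n} {ε : Fin n → Fin n → Bool}

/-- the canonical permutation (0-indexed): ties broken in decreasing index order -/
noncomputable def rho (p : Surjs n) : Fin n → ℕ := rk (fo p) (fun a b => b < a)

lemma canonPerm_eq (p : Surjs n) (i : Fin n) : p.canonPerm i = rho p i + 1 := by
  rw [canonPerm, rho, rk, card_filter, card_filter, card_filter, ← Finset.sum_add_distrib]
  have key : ∀ j : Fin n,
      ((if p.f j < p.f i then 1 else 0) + (if i ≤ j ∧ p.f j = p.f i then 1 else 0) : ℕ) =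
        (if fo p j < fo p i ∨ (fo p j = fo p i ∧ i < j) then 1 else 0)
          + (if j = i then 1 else 0) := by
    intro j
    by_cases hji : j = i
    · subst hji
      rw [if_neg (lt_irrefl _), if_pos ⟨le_refl _, rfl⟩, if_pos rfl, if_neg]
      rintro (h | ⟨_, h⟩)
      · exact lt_irrefl _ h
      · exact lt_irrefl _ h
    · by_cases hA : fo p j < fo p i
      · rw [if_pos (show p.f j < p.f i from hA), if_neg, if_pos (Or.inl hA), if_neg hji]
        rintro ⟨_, h⟩
        have : fo p j = fo p i := congrArg Fin.val h
        omega
      · by_cases hB : fo p j = fo p i ∧ i < j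
        · rw [if_neg (show ¬ p.f j < p.f i by exact fun h => hA h), if_pos, if_pos (Or.inr hB),
            if_neg hji]
          exact ⟨le_of_lt hB.2, Fin.ext hB.1⟩
        · rw [if_neg (show ¬ p.f j < p.f i by exact fun h => hA h), if_neg, if_neg, if_neg hji]
          · rintro (h | h)
            · exact hA h
            · exact hB h
          · rintro ⟨h1, h2⟩
            have he : fo p j = fo p i := congrArg Fin.val h2
            have hne : i ≠ j := fun h => hji h.symm
            rcases lt_or_eq_of_le h1 with h | h
            · exact hB ⟨he, h⟩
            · exact hne h
  rw [Finset.sum_congr rfl (fun j _ => key j), Finset.sum_add_distrib,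
    Finset.sum_ite_eq' univ i (fun _ => (1 : ℕ)), if_pos (mem_univ i)]
  congr 1
  refine Finset.sum_congr rfl fun x _ => ?_
  by_cases hC : fo p x < fo p i ∨ (fo p x = fo p i ∧ i < x)
  · rw [if_pos hC, if_pos hC]
  · rw [if_neg hC, if_neg hC]

/-- the canonical permutation as a surjection -/
noncomputable def canonSurj (p : Surjs n) : Surjs n :=
  mkSurj n (le_refl n) (rho p) (rk_lt tieOrder_gt) (rk_surj tieOrder_gt)

lemma canonSurj_k (p : Surjs n) : (canonSurj p).k = n := rfl
lemma canonSurj_fo (p : Surjs n) (i : Fin n) : fo (canonSurj p) i = rho p i := rfl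

lemma canonSurj_refines (p : Surjs n) : (canonSurj p).Refines p := by
  intro x y hxy
  have h : rho p x ≤ rho p y := hxy
  have := rk_le (f := fo p) tieOrder_gt h
  rw [Fin.le_def]
  exact this

lemma canonSurj_sgn
    (hcan : ∀ i j : Fin n, i < j → ε i j = decide (p.canonPerm j < p.canonPerm i)) :
    ∀ i j : Fin n, i < j → ε i j = (canonSurj p).sgn i j := by
  intro i j hij
  rw [hcan i j hij, sgn]
  apply decide_eq_decide.mpr
  have e1 : ((canonSurj p).f j : ℕ) = rho p j := rfl
  have e2 : ((canonSurj p).f i : ℕ) = rho p i := rfl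
  rw [Fin.lt_def, e1, e2, canonPerm_eq, canonPerm_eq]
  omega

end SurjAux

open SurjAux Finset Surjs in
/-- Coefficientwise form of `Σ_{o refines p} (−1)^{k(o)} X(o) = (−1)^n X(r(p))`. -/
theorem alternating_sum_refinements_eq_canonical (n : ℕ) (hn : 1 ≤ n) (p : Surjs n)
    (ε : Fin n → Fin n → Bool) :
    (∑ o : Surjs n,
        if o.Refines p ∧ (∀ i j : Fin n, i < j → ε i j = o.sgn i j) then
          ((-1 : ℤ) ^ o.k) else 0) =
      if ∀ i j : Fin n, i < j → ε i j = decide (p.canonPerm j < p.canonPerm i) then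
        ((-1 : ℤ) ^ n) else 0 := by
  rw [← Finset.sum_filter]
  by_cases hne : ∃ o₀ : Surjs n, o₀.Refines p ∧ ∀ i j : Fin n, i < j → ε i j = o₀.sgn i j
  case neg =>
    have hTe : (univ.filter fun o : Surjs n =>
        o.Refines p ∧ ∀ i j : Fin n, i < j → ε i j = o.sgn i j) = ∅ :=
      filter_eq_empty_iff.mpr (fun {o} _ hc => hne ⟨o, hc⟩)
    rw [hTe, sum_empty, if_neg]
    intro hcan
    exact hne ⟨canonSurj p, canonSurj_refines p, canonSurj_sgn hcan⟩
  case pos =>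
    obtain ⟨o₀, hr₀, hε₀⟩ := hne
    set σ := rk (fo o₀) (fun i j : Fin n => i < j) with hσdef
    have G : Good σ := good_rk tieOrder_lt
    have hsig₀ : Sig o₀ σ := sig_rk o₀
    have hsig : ∀ o : Surjs n, (∀ i j : Fin n, i < j → ε i j = o.sgn i j) → Sig o σ :=
      fun o hε => sig_congr hε₀ hε hsig₀
    have hmono : ∀ a b : Fin n, σ a ≤ σ b → p.f a ≤ p.f b := by
      intro a b h
      have h2 : fo o₀ a ≤ fo o₀ b := sig_mono hsig₀ h
      exact hr₀ a b (by rw [Fin.le_def]; exact h2)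
    have hεσ : ∀ i j : Fin n, i < j → ε i j = decide (σ j < σ i) := by
      intro i j hij
      rw [hε₀ i j hij, sgn]
      apply decide_eq_decide.mpr
      rw [Fin.lt_def]
      constructor
      · intro h
        exact (hsig₀ j i).mp (Or.inl h)
      · intro h
        rcases (hsig₀ j i).mpr h with h' | ⟨_, hji⟩
        · exact h'
        · exact absurd hij (not_lt.mpr (le_of_lt hji))
    have hsum : (∑ o ∈ (univ.filter fun o : Surjs n =>
          o.Refines p ∧ ∀ i j : Fin n, i < j → ε i j = o.sgn i j), ((-1 : ℤ) ^ o.k)) =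
        ∑ S ∈ (AOf σ p).powerset, ((-1 : ℤ) ^ (n - S.card)) := by
      refine Finset.sum_bij' (fun o _ => SOf σ o)
        (fun S hS => mkMerge hn G (mem_powerset.mp hS)) ?_ ?_ ?_ ?_ ?_
      · intro o ho
        rw [mem_filter] at ho
        exact mem_powerset.mpr (SOf_subset G (hsig o ho.2.2) ho.2.1)
      · intro S hS
        rw [mem_filter]
        exact ⟨mem_univ _, mkMerge_refines hn G _ hmono, mkMerge_sgn hn G _ hεσ⟩
      · intro o ho
        rw [mem_filter] at ho
        have hso := hsig o ho.2.2
        apply surj_ext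
        · rw [mkMerge_k]
          have := k_card hn G hso
          beta_reduce
          omega
        · intro i
          rw [mkMerge_fo]
          have h1 := fo_add_card G hso (σ i) (G.lt i) i rfl
          rw [gg]
          beta_reduce
          omega
      · intro S hS
        exact mkMerge_SOf hn G (mem_powerset.mp hS)
      · intro o ho
        rw [mem_filter] at ho
        have := k_card hn G (hsig o ho.2.2)
        beta_reduce
        congr 1
        omega
    rw [hsum]
    have hpow : ∀ S ∈ (AOf σ p).powerset,
        ((-1 : ℤ) ^ (n - S.card)) = ((-1 : ℤ) ^ n) * ((-1 : ℤ) ^ S.card) := by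
      intro S hS
      have hc : S.card ≤ n := by
        have := S_card_le (mem_powerset.mp hS)
        omega
      have h1 : ((-1 : ℤ) ^ (n - S.card)) * ((-1 : ℤ) ^ S.card) = (-1 : ℤ) ^ n := by
        rw [← pow_add]
        congr 1
        omega
      have h2 : ((-1 : ℤ) ^ S.card) * ((-1 : ℤ) ^ S.card) = 1 := by
        rw [← pow_add]
        exact Even.neg_one_pow ⟨S.card, rfl⟩
      calc ((-1 : ℤ) ^ (n - S.card))
          = (-1 : ℤ) ^ (n - S.card) * (((-1 : ℤ) ^ S.card) * ((-1 : ℤ) ^ S.card)) := by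
            rw [h2, mul_one]
        _ = ((-1 : ℤ) ^ (n - S.card) * ((-1 : ℤ) ^ S.card)) * ((-1 : ℤ) ^ S.card) := by ring
        _ = ((-1 : ℤ) ^ n) * ((-1 : ℤ) ^ S.card) := by rw [h1]
    rw [Finset.sum_congr rfl hpow, ← Finset.mul_sum, Finset.sum_powerset_neg_one_pow_card]
    by_cases hA : AOf σ p = ∅
    · rw [if_pos hA, mul_one, if_pos]
      intro i j hij
      have hS0 : SOf σ o₀ = ∅ := subset_empty.mp (hA ▸ SOf_subset G hsig₀ hr₀)
      have hD : ∀ x y : Fin n, σ x < σ y →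
          (fo p x < fo p y ∨ (fo p x = fo p y ∧ y < x)) := by
        intro x y hxy
        have hple : p.f x ≤ p.f y := hmono x y (le_of_lt hxy)
        have hple' : fo p x ≤ fo p y := hple
        rcases lt_or_eq_of_le hple' with h | h
        · exact Or.inl h
        · refine Or.inr ⟨h, ?_⟩
          exact chainDec G hA hmono (σ y - σ x) (σ x) x y rfl (by omega) (by omega) (Fin.ext h)
      rw [hεσ i j hij, canonPerm_eq, canonPerm_eq]
      apply decide_eq_decide.mpr
      constructor
      · intro h
        have := rk_strict (f := fo p) tieOrder_gt (hD j i h)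
        rw [← rho] at this
        omega
      · intro h
        rcases lt_trichotomy (σ i) (σ j) with h' | h' | h'
        · exfalso
          have := rk_strict (f := fo p) tieOrder_gt (hD i j h')
          rw [← rho] at this
          omega
        · exact absurd (G.inj h') (ne_of_lt hij)
        · exact h'
    · rw [if_neg hA, mul_zero, if_neg]
      intro hcan
      apply hA
      apply Finset.eq_empty_iff_forall_notMem.mpr
      intro a ha
      rw [AOf, mem_filter] at ha
      obtain ⟨har, i, j, hi, hj, hij, hpe⟩ := ha
      have hρ : rho p j < rho p i :=
        rk_strict tieOrder_gt (Or.inr ⟨(congrArg Fin.val hpe).symm, hij⟩)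
      have h1 := hcan i j hij
      have h2 := hεσ i j hij
      rw [canonPerm_eq, canonPerm_eq] at h1
      have ht : ε i j = true := by
        rw [h1]
        apply decide_eq_true
        omega
      rw [ht] at h2
      have h3 : σ j < σ i := of_decide_eq_true h2.symm
      omega
end

section
/- Let n ≥ 1 and let p : Fin n → Fin k be a surjection. Then for all i < j in Fin n: r(p)(i) > r(p)(j) if and only if p(i) ≥ p(j). (Equivalently, sgn(r(p)) coincides with the negation of sgn(p̄), which is the paper's identity X(r(p)) = X(p̄)⁻¹ between monomials.) -/
open scoped Classical

/-- `X(r(p)) = X(p̄)⁻¹`: for `i < j`, `r(p)(i) > r(p)(j)` iff `p(i) ≥ p(j)`. -/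
theorem canonical_permutation_inversions (n : ℕ) (hn : 1 ≤ n) (p : Surjs n)
    (i j : Fin n) (hij : i < j) :
    p.canonPerm j < p.canonPerm i ↔ p.f j ≤ p.f i := by
  classical
  unfold Surjs.canonPerm
  rcases lt_trichotomy (p.f j) (p.f i) with hlt | heq | hgt
  · simp only [hlt.le, iff_true]
    have hdisj : Disjoint (Finset.univ.filter fun l => p.f l < p.f j)
        (Finset.univ.filter fun l => j ≤ l ∧ p.f l = p.f j) := by
      rw [Finset.disjoint_left]
      intro l h1 h2
      simp only [Finset.mem_filter, Finset.mem_univ, true_and] at h1 h2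
      exact absurd h2.2 (ne_of_lt h1)
    have hsub : (Finset.univ.filter fun l => p.f l < p.f j) ∪
        (Finset.univ.filter fun l => j ≤ l ∧ p.f l = p.f j) ⊆
        Finset.univ.filter fun l => p.f l < p.f i := by
      intro l hl
      simp only [Finset.mem_union, Finset.mem_filter, Finset.mem_univ, true_and] at hl ⊢
      rcases hl with h1 | h2
      · exact lt_trans h1 hlt
      · exact h2.2 ▸ hlt
    have h1 : (Finset.univ.filter fun l => p.f l < p.f j).card +
        (Finset.univ.filter fun l => j ≤ l ∧ p.f l = p.f j).card ≤
        (Finset.univ.filter fun l => p.f l < p.f i).card := by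
      rw [← Finset.card_union_of_disjoint hdisj]
      exact Finset.card_le_card hsub
    have h2 : 0 < (Finset.univ.filter fun l => i ≤ l ∧ p.f l = p.f i).card :=
      Finset.card_pos.2 ⟨i, by simp⟩
    omega
  · simp only [heq, le_refl, iff_true]
    have hss : (Finset.univ.filter fun l => j ≤ l ∧ p.f l = p.f i) ⊂
        (Finset.univ.filter fun l => i ≤ l ∧ p.f l = p.f i) := by
      constructor
      · intro l hl
        simp only [Finset.mem_filter, Finset.mem_univ, true_and] at hl ⊢
        exact ⟨le_trans hij.le hl.1, hl.2⟩
      · intro hsub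
        have hi : i ∈ (Finset.univ.filter fun l => i ≤ l ∧ p.f l = p.f i) := by simp
        have := hsub hi
        simp only [Finset.mem_filter, Finset.mem_univ, true_and] at this
        exact absurd this.1 (not_le_of_gt hij)
    exact Nat.add_lt_add_left (Finset.card_lt_card hss) _
  · have hR : ¬ (p.f j ≤ p.f i) := not_le_of_gt hgt
    simp only [hR, iff_false, not_lt]
    have hdisj : Disjoint (Finset.univ.filter fun l => p.f l < p.f i)
        (Finset.univ.filter fun l => i ≤ l ∧ p.f l = p.f i) := by
      rw [Finset.disjoint_left]
      intro l h1 h2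
      simp only [Finset.mem_filter, Finset.mem_univ, true_and] at h1 h2
      exact absurd h2.2 (ne_of_lt h1)
    have hsub : (Finset.univ.filter fun l => p.f l < p.f i) ∪
        (Finset.univ.filter fun l => i ≤ l ∧ p.f l = p.f i) ⊆
        Finset.univ.filter fun l => p.f l < p.f j := by
      intro l hl
      simp only [Finset.mem_union, Finset.mem_filter, Finset.mem_univ, true_and] at hl ⊢
      rcases hl with h1 | h2
      · exact lt_trans h1 hgt
      · exact h2.2 ▸ hgt
    have h1 : (Finset.univ.filter fun l => p.f l < p.f i).card +
        (Finset.univ.filter fun l => i ≤ l ∧ p.f l = p.f i).card ≤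
        (Finset.univ.filter fun l => p.f l < p.f j).card := by
      rw [← Finset.card_union_of_disjoint hdisj]
      exact Finset.card_le_card hsub
    omega
end

section
/- Let n ≥ 1, let m be offset data on Fin n, and let p be a surjection with domain Fin n, with reverse p̄. Then in the Laurent polynomial ring ℤ[T, T⁻¹] (LaurentPolynomial ℤ): the sum, over all surjections o with domain Fin n that refine p̄, of (−1)^{k(o)−1}·T^{w(o)}, equals (−1)^{n−1}·T^{−w(p)}. (This is the paper's identity Σ_{o refines p̄} (−1)^{k(o)−1} D^{−n_t(o)−n_a(o)+n_i(o)} = (−1)^{n_e} D^{n_t(p)+n_a(p)−n_i(p)}, since for a scheme with n vertices and n_e edges Euler's formula gives (−1)^{n−1} = (−1)^{n_e}.) -/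
open scoped Classical

/-- For offset data `m` (multiplicity of offset edges from `i` to `j`, for `i < j`),
`wgt m o = Σ_{i<j} m i j · ε_o(i,j)` where `ε_o(i,j) = 1` if `o i > o j` and `-1`
otherwise; so `-wgt m o = n_t(o) + n_a(o) - n_i(o)`. -/
def wgt {n : ℕ} (m : Fin n → Fin n → ℕ) (o : Surjs n) : ℤ :=
  ∑ i : Fin n, ∑ j : Fin n,
    if i < j then (m i j : ℤ) * (if o.f j < o.f i then 1 else -1) else 0

open LaurentPolynomial

/-! Replace `p̄` by an arbitrary map `q` from `Fin n` to a linear order and induct on `n`. Every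
surjection on `Fin (n + 1)` arises exactly once by inserting the last point into a surjection `o`
on `Fin n`, either into an existing block `t` or as a new block at position `t`, which has one
block more and hence the opposite sign. Since ties and anti-inversions are weighted alike, joining
block `t` weighs the same as a new block at `t + 1`. For `o` refining `q` on `Fin n`, the
positions admissible for refining `q` form an interval, so the contributions telescope to its
lowest new block, where the edges into the last point are weighted by the order of `q` itself. -/

theorem Fin.sum_sum_ite_lt_succ {M : Type*} [AddCommMonoid M] {n : ℕ}
    (g : Fin (n + 1) → Fin (n + 1) → M) :
    (∑ i, ∑ j, if i < j then g i j else 0) =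
      (∑ i : Fin n, ∑ j : Fin n, if i < j then g i.castSucc j.castSucc else 0) +
        ∑ i : Fin n, g i.castSucc (Fin.last n) := by
  simp only [Fin.sum_univ_castSucc, Fin.castSucc_lt_castSucc_iff, Fin.castSucc_lt_last,
    if_true, Fin.not_lt.mpr (Fin.le_last _), if_false, Finset.sum_const_zero, add_zero,
    Finset.sum_add_distrib]

theorem Finset.sum_range_succ_ite_and_eq_add_least {M : Type*} [AddCommMonoid M] (a : ℕ → M)
    {L U : ℕ → Prop} [DecidablePred L] [DecidablePred U] (hU : Monotone U) {lo : ℕ}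
    (hlo : IsLeast {t | U t} lo) (hL : L lo) {k : ℕ} (hk : lo ≤ k) :
    (∑ t ∈ range (k + 1), if U t ∧ L t then a t else 0) =
      (∑ t ∈ range k, if U t ∧ L (t + 1) then a (t + 1) else 0) + a lo := by
  induction k, hk using Nat.le_induction with
  | base =>
    have hU_lt : ∀ t ∈ range lo, ¬ U t := fun t ht hUt =>
      (Finset.mem_range.mp ht).not_ge (hlo.2 hUt)
    rw [sum_range_succ, sum_eq_zero fun t ht => if_neg fun h => hU_lt t ht h.1,
      sum_eq_zero fun t ht => if_neg fun h => hU_lt t ht h.1, if_pos ⟨hlo.1, hL⟩]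
  | succ k hk ih =>
    have hUk : U k := hU hk hlo.1
    rw [sum_range_succ, ih, sum_range_succ _ k, if_congr (and_iff_right (hU k.le_succ hUk)) rfl rfl,
      if_congr (and_iff_right hUk) rfl rfl, add_right_comm]

/-- `weakWgt m q = n_t(q) + n_i(q) - n_a(q)`: unlike in `wgt`, ties count as inversions. -/
def weakWgt {n : ℕ} {β : Type*} [LinearOrder β] (m : Fin n → Fin n → ℕ) (q : Fin n → β) : ℤ :=
  ∑ i : Fin n, ∑ j : Fin n,
    if i < j then (m i j : ℤ) * (if q j ≤ q i then 1 else -1) else 0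

def lastWgt {n : ℕ} {α : Type*} [LinearOrder α] (m : Fin (n + 1) → Fin (n + 1) → ℕ)
    (r : Fin n → α) (c : α) : ℤ :=
  ∑ i : Fin n, (m i.castSucc (Fin.last n) : ℤ) * (if c ≤ r i then 1 else -1)

theorem weakWgt_succ {n : ℕ} {β : Type*} [LinearOrder β] (m : Fin (n + 1) → Fin (n + 1) → ℕ)
    (q : Fin (n + 1) → β) :
    weakWgt m q = weakWgt (fun i j => m i.castSucc j.castSucc) (fun i => q i.castSucc) +
      lastWgt m (fun i => q i.castSucc) (q (Fin.last n)) :=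
  Fin.sum_sum_ite_lt_succ _

theorem weakWgt_rev {n : ℕ} (m : Fin n → Fin n → ℕ) (p : Surjs n) :
    weakWgt m p.rev.f = -wgt m p := by
  simp only [weakWgt, wgt, ← Finset.sum_neg_distrib]
  refine Finset.sum_congr rfl fun i _ => Finset.sum_congr rfl fun j _ => ?_
  have hle : p.rev.f j ≤ p.rev.f i ↔ ¬ p.f j < p.f i := Fin.rev_le_rev.trans not_lt.symm
  split_ifs <;> simp_all

namespace Surjs

variable {n : ℕ}

theorem ext_of_val {o₁ o₂ : Surjs n} (hk : o₁.k = o₂.k) (hf : ∀ i, (o₁.f i : ℕ) = o₂.f i) :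
    o₁ = o₂ := by
  obtain ⟨⟨k₁, f₁⟩, h₁⟩ := o₁
  obtain ⟨⟨k₂, f₂⟩, h₂⟩ := o₂
  obtain rfl : k₁ = k₂ := Fin.ext hk
  obtain rfl : f₁ = f₂ := funext fun i => Fin.ext (hf i)
  rfl

theorem exists_val_f_eq (o : Surjs n) {y : ℕ} (hy : y < o.k) : ∃ i, (o.f i : ℕ) = y :=
  (o.2 ⟨y, hy⟩).imp fun _ hi => congrArg Fin.val hi

theorem one_le_k (o : Surjs n) (hn : 1 ≤ n) : 1 ≤ o.k :=
  (o.f ⟨0, hn⟩).pos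

instance : Subsingleton (Surjs 0) :=
  ⟨fun o₁ o₂ => ext_of_val (by have := o₁.1.1.isLt; have := o₂.1.1.isLt; simp only [k]; omega)
    finZeroElim⟩

def ofNat (k : ℕ) (g : Fin n → ℕ) (hg : Set.range g = Set.Iio k) : Surjs n :=
  have hlt (i : Fin n) : g i < k := hg.subset (Set.mem_range_self i)
  have hsurj : Function.Surjective fun i => (⟨g i, hlt i⟩ : Fin k) := fun y =>
    (hg.symm.subset y.isLt).imp fun _ hi => Fin.ext hi
  ⟨⟨⟨k, Nat.lt_succ_of_le (by simpa using Fintype.card_le_of_surjective _ hsurj)⟩, _⟩, hsurj⟩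

@[simp] theorem k_ofNat (k : ℕ) (g : Fin n → ℕ) (hg : Set.range g = Set.Iio k) :
    (ofNat k g hg).k = k := rfl

@[simp] theorem val_f_ofNat (k : ℕ) (g : Fin n → ℕ) (hg : Set.range g = Set.Iio k) (i : Fin n) :
    ((ofNat k g hg).f i : ℕ) = g i := rfl

/-- The number of blocks of `o` weakly below the point inserted by `o.insertLast d`. -/
def numLe {k : ℕ} : Fin k ⊕ Fin (k + 1) → ℕ
  | .inl t => t + 1
  | .inr t => t

/-- The number of blocks of `o` strictly below the point inserted by `o.insertLast d`. -/
def numLt {k : ℕ} : Fin k ⊕ Fin (k + 1) → ℕ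
  | .inl t => t
  | .inr t => t

section insertLast

variable (o : Surjs n)

theorem range_snoc_val_f (t : Fin o.k) :
    Set.range (Fin.snoc (α := fun _ => ℕ) (fun i => (o.f i : ℕ)) (t : ℕ)) = Set.Iio o.k := by
  ext y
  simp only [Fin.range_snoc, Set.mem_insert_iff, Set.mem_range, Set.mem_Iio]
  refine ⟨?_, fun hy => .inr (o.exists_val_f_eq hy)⟩
  rintro (rfl | ⟨i, rfl⟩) <;> simp

theorem range_snoc_shift_val_f (t : Fin (o.k + 1)) :
    Set.range (Fin.snoc (α := fun _ => ℕ)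
      (fun i => if (o.f i : ℕ) < t then (o.f i : ℕ) else o.f i + 1) (t : ℕ)) =
      Set.Iio (o.k + 1) := by
  ext y
  simp only [Fin.range_snoc, Set.mem_insert_iff, Set.mem_range, Set.mem_Iio]
  constructor
  · rintro (rfl | ⟨i, rfl⟩)
    · exact t.isLt
    · have := (o.f i).isLt
      split_ifs <;> omega
  · intro hy
    by_cases hyt : y = t
    · exact .inl hyt
    · obtain ⟨i, hi⟩ := o.exists_val_f_eq (y := if y < t then y else y - 1) (by split_ifs <;> omega)
      exact .inr ⟨i, by split_ifs at hi ⊢ <;> omega⟩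

/-- Insert a last point `n` into `o`: `inl t` puts it into the block `t`, `inr t` makes it a
new block at position `t`, shifting the blocks `t, t + 1, …` up by one. -/
def insertLast : Fin o.k ⊕ Fin (o.k + 1) → Surjs (n + 1)
  | .inl t => ofNat o.k _ (o.range_snoc_val_f t)
  | .inr t => ofNat (o.k + 1) _ (o.range_snoc_shift_val_f t)

@[simp] theorem k_insertLast_inl (t : Fin o.k) : (o.insertLast (.inl t)).k = o.k := rfl

@[simp] theorem k_insertLast_inr (t : Fin (o.k + 1)) : (o.insertLast (.inr t)).k = o.k + 1 := rfl

@[simp] theorem val_insertLast_inl_castSucc (t : Fin o.k) (i : Fin n) :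
    ((o.insertLast (.inl t)).f i.castSucc : ℕ) = o.f i := by
  simp [insertLast]

@[simp] theorem val_insertLast_inr_castSucc (t : Fin (o.k + 1)) (i : Fin n) :
    ((o.insertLast (.inr t)).f i.castSucc : ℕ) =
      if (o.f i : ℕ) < t then (o.f i : ℕ) else (o.f i : ℕ) + 1 := by
  simp [insertLast]

@[simp] theorem val_insertLast_last (d : Fin o.k ⊕ Fin (o.k + 1)) :
    ((o.insertLast d).f (Fin.last n) : ℕ) = numLt d := by
  cases d <;> simp [insertLast, numLt]

theorem insertLast_castSucc_le_castSucc_iff (d : Fin o.k ⊕ Fin (o.k + 1)) (i j : Fin n) :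
    (o.insertLast d).f i.castSucc ≤ (o.insertLast d).f j.castSucc ↔ o.f i ≤ o.f j := by
  rcases d with t | t
  · simp only [Fin.le_def, val_insertLast_inl_castSucc]
  · simp only [Fin.le_def, val_insertLast_inr_castSucc]
    split_ifs <;> omega

theorem insertLast_castSucc_le_last_iff (d : Fin o.k ⊕ Fin (o.k + 1)) (i : Fin n) :
    (o.insertLast d).f i.castSucc ≤ (o.insertLast d).f (Fin.last n) ↔ (o.f i : ℕ) < numLe d := by
  rcases d with t | t
  · simp only [Fin.le_def, val_insertLast_inl_castSucc, val_insertLast_last, numLe, numLt]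
    omega
  · simp only [Fin.le_def, val_insertLast_inr_castSucc, val_insertLast_last, numLe, numLt]
    split_ifs <;> omega

theorem insertLast_last_le_castSucc_iff (d : Fin o.k ⊕ Fin (o.k + 1)) (i : Fin n) :
    (o.insertLast d).f (Fin.last n) ≤ (o.insertLast d).f i.castSucc ↔ numLt d ≤ (o.f i : ℕ) := by
  rcases d with t | t
  · simp only [Fin.le_def, val_insertLast_inl_castSucc, val_insertLast_last]
  · simp only [Fin.le_def, val_insertLast_inr_castSucc, val_insertLast_last, numLt]
    split_ifs <;> omega

theorem insertLast_castSucc_lt_castSucc_iff (d : Fin o.k ⊕ Fin (o.k + 1)) (i j : Fin n) :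
    (o.insertLast d).f i.castSucc < (o.insertLast d).f j.castSucc ↔ o.f i < o.f j := by
  simp only [← not_le, insertLast_castSucc_le_castSucc_iff]

theorem insertLast_last_lt_castSucc_iff (d : Fin o.k ⊕ Fin (o.k + 1)) (i : Fin n) :
    (o.insertLast d).f (Fin.last n) < (o.insertLast d).f i.castSucc ↔ numLe d ≤ (o.f i : ℕ) := by
  rw [← not_le, insertLast_castSucc_le_last_iff, not_lt]

theorem insertLast_inl_ne_inr (o' : Surjs n) (t : Fin o.k) (t' : Fin (o'.k + 1)) :
    o.insertLast (.inl t) ≠ o'.insertLast (.inr t') := by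
  intro h
  obtain ⟨i, hi⟩ := o.exists_val_f_eq t.isLt
  have hi' := congrArg (fun o => ((o : Surjs (n + 1)).f i.castSucc : ℕ)) h
  have hlast := congrArg (fun o => ((o : Surjs (n + 1)).f (Fin.last n) : ℕ)) h
  simp only [val_insertLast_inl_castSucc, val_insertLast_inr_castSucc, val_insertLast_last,
    numLt, hi] at hi' hlast
  split_ifs at hi' <;> omega

end insertLast

theorem insertLast_injective :
    Function.Injective fun x : Σ o : Surjs n, Fin o.k ⊕ Fin (o.k + 1) => x.1.insertLast x.2 := by
  rintro ⟨o₁, d₁⟩ ⟨o₂, d₂⟩ h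
  have hk := congrArg k h
  have hv (x : Fin (n + 1)) := congrArg (fun o => ((o : Surjs (n + 1)).f x : ℕ)) h
  have hlast := hv (Fin.last n)
  simp only [val_insertLast_last] at hlast
  rcases d₁ with t₁ | t₁ <;> rcases d₂ with t₂ | t₂
  · obtain rfl : o₁ = o₂ := ext_of_val hk fun i => by simpa using hv i.castSucc
    obtain rfl : t₁ = t₂ := Fin.ext hlast
    rfl
  · exact absurd h (insertLast_inl_ne_inr _ _ _ _)
  · exact absurd h.symm (insertLast_inl_ne_inr _ _ _ _)
  · simp only [numLt] at hlast
    obtain rfl : o₁ = o₂ := ext_of_val (by simpa using hk) fun i => by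
      have hi := hv i.castSucc
      simp only [val_insertLast_inr_castSucc] at hi
      split_ifs at hi <;> omega
    obtain rfl : t₁ = t₂ := Fin.ext hlast
    rfl

theorem exists_insertLast_inl_eq (o : Surjs (n + 1))
    (h : ∃ i : Fin n, o.f i.castSucc = o.f (Fin.last n)) :
    ∃ (o' : Surjs n) (t : Fin o'.k), o'.insertLast (.inl t) = o := by
  have hrange : Set.range (fun i : Fin n => (o.f i.castSucc : ℕ)) = Set.Iio o.k := by
    ext y
    simp only [Set.mem_range, Set.mem_Iio]
    refine ⟨fun ⟨i, hi⟩ => hi ▸ (o.f _).isLt, fun hy => ?_⟩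
    rcases Fin.exists_fin_succ'.mp (o.exists_val_f_eq hy) with hy' | hy'
    · exact hy'
    · exact h.imp fun i hi => (congrArg Fin.val hi).trans hy'
  refine ⟨ofNat o.k _ hrange, o.f (Fin.last n), ext_of_val rfl fun x => ?_⟩
  induction x using Fin.lastCases with
  | last => exact val_insertLast_last _ (.inl _)
  | cast i => exact val_insertLast_inl_castSucc _ _ i

theorem exists_insertLast_inr_eq (o : Surjs (n + 1))
    (h : ∀ i : Fin n, o.f i.castSucc ≠ o.f (Fin.last n)) :
    ∃ (o' : Surjs n) (t : Fin (o'.k + 1)), o'.insertLast (.inr t) = o := by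
  obtain ⟨z, hz⟩ : ∃ z, (o.f (Fin.last n) : ℕ) = z := ⟨_, rfl⟩
  have hzk : z < o.k := hz ▸ (o.f _).isLt
  have hne (i : Fin n) : (o.f i.castSucc : ℕ) ≠ z := hz ▸ Fin.val_ne_of_ne (h i)
  have hrange : Set.range (fun i : Fin n => if (o.f i.castSucc : ℕ) < z then (o.f i.castSucc : ℕ)
      else o.f i.castSucc - 1) = Set.Iio (o.k - 1) := by
    ext y
    simp only [Set.mem_range, Set.mem_Iio]
    constructor
    · rintro ⟨i, rfl⟩
      have := (o.f i.castSucc).isLt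
      have := hne i
      split_ifs <;> omega
    · intro hy
      obtain ⟨x, hx⟩ := o.exists_val_f_eq (y := if y < z then y else y + 1) (by split_ifs <;> omega)
      induction x using Fin.lastCases with
      | last => split_ifs at hx <;> omega
      | cast i =>
        have := hne i
        exact ⟨i, by split_ifs at hx ⊢ <;> omega⟩
  refine ⟨ofNat (o.k - 1) _ hrange, ⟨z, show z < o.k - 1 + 1 by omega⟩,
    ext_of_val (show o.k - 1 + 1 = o.k by omega) fun x => ?_⟩
  induction x using Fin.lastCases with
  | last => simp only [val_insertLast_last, numLt, hz]
  | cast i =>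
    have := hne i
    simp only [val_insertLast_inr_castSucc, val_f_ofNat]
    split_ifs <;> omega

theorem insertLast_surjective :
    Function.Surjective fun x : Σ o : Surjs n, Fin o.k ⊕ Fin (o.k + 1) => x.1.insertLast x.2 := by
  intro o
  by_cases h : ∃ i : Fin n, o.f i.castSucc = o.f (Fin.last n)
  · obtain ⟨o', t, rfl⟩ := exists_insertLast_inl_eq o h
    exact ⟨⟨o', .inl t⟩, rfl⟩
  · push Not at h
    obtain ⟨o', t, rfl⟩ := exists_insertLast_inr_eq o h
    exact ⟨⟨o', .inr t⟩, rfl⟩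

theorem insertLast_bijective :
    Function.Bijective fun x : Σ o : Surjs n, Fin o.k ⊕ Fin (o.k + 1) => x.1.insertLast x.2 :=
  ⟨insertLast_injective, insertLast_surjective⟩

theorem wgt_insertLast (m : Fin (n + 1) → Fin (n + 1) → ℕ) (o : Surjs n)
    (d : Fin o.k ⊕ Fin (o.k + 1)) :
    wgt m (o.insertLast d) =
      wgt (fun i j => m i.castSucc j.castSucc) o + lastWgt m (fun i => (o.f i : ℕ)) (numLe d) := by
  rw [wgt, Fin.sum_sum_ite_lt_succ]
  congr 1
  · simp only [wgt, insertLast_castSucc_lt_castSucc_iff]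
  · simp only [lastWgt, insertLast_last_lt_castSucc_iff]

variable {β : Type*} [LinearOrder β]

def RefinesFun (o : Surjs n) (q : Fin n → β) : Prop :=
  ∀ x y, o.f x ≤ o.f y → q x ≤ q y

def LastGeBelow (o : Surjs n) (q : Fin (n + 1) → β) (t : ℕ) : Prop :=
  ∀ i, (o.f i : ℕ) < t → q i.castSucc ≤ q (Fin.last n)

def LastLeFrom (o : Surjs n) (q : Fin (n + 1) → β) (t : ℕ) : Prop :=
  ∀ i, t ≤ (o.f i : ℕ) → q (Fin.last n) ≤ q i.castSucc

theorem refinesFun_insertLast_iff (o : Surjs n) (q : Fin (n + 1) → β)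
    (d : Fin o.k ⊕ Fin (o.k + 1)) :
    (o.insertLast d).RefinesFun q ↔
      o.RefinesFun (fun i => q i.castSucc) ∧ o.LastLeFrom q (numLt d) ∧
        o.LastGeBelow q (numLe d) := by
  simp only [RefinesFun, LastGeBelow, LastLeFrom, Fin.forall_fin_succ',
    insertLast_castSucc_le_castSucc_iff, insertLast_castSucc_le_last_iff,
    insertLast_last_le_castSucc_iff, le_refl, imp_self, and_true, forall_and, and_assoc]

theorem monotone_lastLeFrom (o : Surjs n) (q : Fin (n + 1) → β) : Monotone (o.LastLeFrom q) :=
  fun _ _ hst h i hi => h i (hst.trans hi)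

theorem exists_isLeast_lastLeFrom (o : Surjs n) (q : Fin (n + 1) → β) :
    ∃ lo ≤ o.k, IsLeast {t | o.LastLeFrom q t} lo := by
  have hk : o.LastLeFrom q o.k := fun i hi => absurd (o.f i).isLt hi.not_gt
  exact ⟨Nat.find ⟨_, hk⟩, Nat.find_min' _ hk, Nat.find_spec ⟨_, hk⟩, fun _ => Nat.find_min' _⟩

theorem val_f_lt_iff_of_isLeast {o : Surjs n} {q : Fin (n + 1) → β}
    (hR : o.RefinesFun fun i => q i.castSucc) {lo : ℕ} (hlo : IsLeast {t | o.LastLeFrom q t} lo)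
    (i : Fin n) : (o.f i : ℕ) < lo ↔ q i.castSucc < q (Fin.last n) := by
  refine ⟨fun hi => ?_, fun hq => ?_⟩
  · have : ¬ o.LastLeFrom q (o.f i) := fun h => hi.not_ge (hlo.2 h)
    simp only [LastLeFrom, not_forall, not_le] at this
    obtain ⟨j, hij, hj⟩ := this
    exact (hR i j (Fin.le_def.mpr hij)).trans_lt hj
  · by_contra! hi
    exact hq.not_ge (hlo.1 i hi)

theorem lastWgt_val_f_eq_of_isLeast (m : Fin (n + 1) → Fin (n + 1) → ℕ) {o : Surjs n}
    {q : Fin (n + 1) → β} (hR : o.RefinesFun fun i => q i.castSucc) {lo : ℕ}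
    (hlo : IsLeast {t | o.LastLeFrom q t} lo) :
    lastWgt m (fun i => (o.f i : ℕ)) lo = lastWgt m (fun i => q i.castSucc) (q (Fin.last n)) := by
  simp only [lastWgt, ← not_lt, val_f_lt_iff_of_isLeast hR hlo]

/-- Signs `(-1) ^ k` rather than `(-1) ^ (k - 1)`, so that `sum_refinementTerm` holds from
`n = 0` on. -/
noncomputable def refinementTerm (m : Fin n → Fin n → ℕ) (q : Fin n → β) (o : Surjs n) : ℤ[T;T⁻¹] :=
  if o.RefinesFun q then (-1) ^ o.k * T (wgt m o) else 0

theorem sum_refinementTerm_insertLast (m : Fin (n + 1) → Fin (n + 1) → ℕ) (q : Fin (n + 1) → β)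
    (o : Surjs n) :
    ∑ d, refinementTerm m q (o.insertLast d) =
      -(refinementTerm (fun i j => m i.castSucc j.castSucc) (fun i => q i.castSucc) o *
        T (lastWgt m (fun i => q i.castSucc) (q (Fin.last n)))) := by
  by_cases hR : o.RefinesFun fun i => q i.castSucc
  · obtain ⟨lo, hlok, hlo⟩ := o.exists_isLeast_lastLeFrom q
    have hL : o.LastGeBelow q lo := fun i hi => ((val_f_lt_iff_of_isLeast hR hlo i).mp hi).le
    set a : ℕ → ℤ[T;T⁻¹] := fun t =>
      (-1) ^ (o.k + 1) * T (wgt (fun i j => m i.castSucc j.castSucc) o +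
        lastWgt m (fun i => (o.f i : ℕ)) t) with ha
    have hinl (t : Fin o.k) : refinementTerm m q (o.insertLast (.inl t)) =
        -if o.LastLeFrom q t ∧ o.LastGeBelow q (t + 1) then a (t + 1) else 0 := by
      simp only [refinementTerm, refinesFun_insertLast_iff, hR, true_and, numLe, numLt,
        k_insertLast_inl, wgt_insertLast, ha]
      split_ifs <;> simp [pow_succ]
    have hinr (t : Fin (o.k + 1)) : refinementTerm m q (o.insertLast (.inr t)) =
        if o.LastLeFrom q t ∧ o.LastGeBelow q t then a t else 0 := by
      simp only [refinementTerm, refinesFun_insertLast_iff, hR, true_and, numLe, numLt,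
        k_insertLast_inr, wgt_insertLast, ha]
    rw [Fintype.sum_sum_type]
    simp only [hinl, hinr, Finset.sum_neg_distrib]
    rw [Fin.sum_univ_eq_sum_range (fun t => if o.LastLeFrom q t ∧ o.LastGeBelow q (t + 1)
        then a (t + 1) else 0),
      Fin.sum_univ_eq_sum_range (fun t => if o.LastLeFrom q t ∧ o.LastGeBelow q t then a t else 0),
      Finset.sum_range_succ_ite_and_eq_add_least a (o.monotone_lastLeFrom q) hlo hL hlok]
    simp only [ha, lastWgt_val_f_eq_of_isLeast m hR hlo, refinementTerm, if_pos hR, T_add, pow_succ]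
    ring
  · have hzero (d) : refinementTerm m q (o.insertLast d) = 0 :=
      if_neg fun h => hR ((refinesFun_insertLast_iff o q d).mp h).1
    rw [Finset.sum_eq_zero fun d _ => hzero d, refinementTerm, if_neg hR, zero_mul, neg_zero]

theorem sum_refinementTerm (m : Fin n → Fin n → ℕ) (q : Fin n → β) :
    ∑ o, refinementTerm m q o = (-1) ^ n * T (weakWgt m q) := by
  induction n with
  | zero =>
    rw [Fintype.sum_subsingleton _ (ofNat 0 finZeroElim (by simp))]
    simp [refinementTerm, RefinesFun, wgt, weakWgt]
  | succ n ih =>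
    rw [← Fintype.sum_bijective _ insertLast_bijective
      (fun x => refinementTerm m q (x.1.insertLast x.2)) _ fun _ => rfl, Fintype.sum_sigma]
    simp only [sum_refinementTerm_insertLast, Finset.sum_neg_distrib, ← Finset.sum_mul, ih,
      weakWgt_succ m q, T_add, pow_succ]
    ring

end Surjs

/-- `Σ_{o refines p̄} (−1)^{k(o)−1} D^{−n_t(o)−n_a(o)+n_i(o)}
      = (−1)^{n−1} D^{n_t(p)+n_a(p)−n_i(p)}` in `ℤ[T, T⁻¹]`. -/
theorem offset_sum_cancellation (n : ℕ) (hn : 1 ≤ n) (m : Fin n → Fin n → ℕ)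
    (p : Surjs n) :
    (∑ o : Surjs n,
        if o.Refines p.rev then
          LaurentPolynomial.C ((-1 : ℤ) ^ (o.k - 1)) * T (wgt m o)
        else 0) =
      LaurentPolynomial.C ((-1 : ℤ) ^ (n - 1)) * T (-(wgt m p)) := by
  have hsign {k : ℕ} (hk : 1 ≤ k) : C ((-1 : ℤ) ^ (k - 1)) = -(-1 : ℤ[T;T⁻¹]) ^ k := by
    obtain ⟨j, rfl⟩ := Nat.exists_eq_add_of_le' hk
    simp [pow_succ]
  calc _ = -∑ o, Surjs.refinementTerm m p.rev.f o := by
        rw [← Finset.sum_neg_distrib]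
        refine Finset.sum_congr rfl fun o _ => ?_
        rw [Surjs.refinementTerm]
        by_cases h : o.Refines p.rev
        · rw [if_pos h, if_pos (show o.RefinesFun p.rev.f from h), hsign (o.one_le_k hn), neg_mul]
        · rw [if_neg h, if_neg (show ¬ o.RefinesFun p.rev.f from h), neg_zero]
    _ = _ := by rw [Surjs.sum_refinementTerm, weakWgt_rev, hsign hn, neg_mul]
end

section
/- Let n ≥ 1 and let p be a surjection with domain Fin n. Then the sum, over all surjections o with domain Fin n that refine p, of (−1)^{k(o)}, equals (−1)^n. (This is the Euler–Poincaré relation for the face of the permutahedron corresponding to p: the faces of the n-permutahedron contained in the face of p correspond to the surjections refining p, a surjection onto Fin k corresponding to a face of dimension n − k.) -/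
open scoped Classical

/-!
Replace `Fin n` and `p` by a finite set `s` and a map `g` into a linear order, and encode a
surjection of `s` onto `{0, …, k - 1}` by its `ℕ`-valued rank function. The top block of a surjection refining
`g` is a nonempty set `T` of elements of maximal `g`-value, and removing it leaves a surjection of
`s \ T` onto `{0, …, k - 2}` refining `g`; conversely any such `T` can be put on top of any such
surjection of `s \ T`. So `χ(s) = ∑ₖ (-1)ᵏ #{surjections onto k}` satisfies
`χ(s) = -∑_{∅ ≠ T ⊆ L} χ(s \ T)` for the top level `L` of `s`, and by strong induction
`χ(s) = -(-1)^#s ∑_{∅ ≠ T ⊆ L} (-1)^#T = (-1)^#s`, because `∑_{T ⊆ L} (-1)^#T = 0` for `L ≠ ∅`.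
-/

namespace Permutahedron

open Finset

variable {α β : Type*} [LinearOrder β]

/-- `o` encodes a surjection of `s` onto `{0, …, k - 1}`; the value `0` off `s` makes the encoding
unique. -/
structure IsRanking (s : Finset α) (k : ℕ) (o : α → ℕ) : Prop where
  eq_zero_of_notMem : ∀ x ∉ s, o x = 0
  lt : ∀ x ∈ s, o x < k
  exists_eq : ∀ i < k, ∃ x ∈ s, o x = i

def RefinesOn (g : α → β) (s : Finset α) (o : α → ℕ) : Prop :=
  ∀ x ∈ s, ∀ y ∈ s, o x ≤ o y → g x ≤ g y

def topLevel (g : α → β) (s : Finset α) : Finset α :=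
  {x ∈ s | ∀ y ∈ s, g y ≤ g x}

variable {g : α → β} {s T : Finset α} {k : ℕ} {o : α → ℕ}

lemma topLevel_subset : topLevel g s ⊆ s := fun _ hx => (mem_filter.1 hx).1

lemma IsRanking.le_card (h : IsRanking s k o) : k ≤ #s :=
  calc k = #(range k) := (card_range k).symm
    _ ≤ #(s.image o) := card_le_card fun i hi => by
        obtain ⟨x, hx, rfl⟩ := h.exists_eq i (mem_range.1 hi)
        exact mem_image_of_mem o hx
    _ ≤ #s := card_image_le

lemma isRanking_zero_iff : IsRanking s 0 o ↔ s = ∅ ∧ o = 0 := by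
  constructor
  · intro h
    have hs : s = ∅ := eq_empty_of_forall_notMem fun x hx => Nat.not_lt_zero _ (h.lt x hx)
    exact ⟨hs, funext fun x => h.eq_zero_of_notMem x (hs ▸ notMem_empty x)⟩
  · rintro ⟨rfl, rfl⟩
    exact ⟨fun _ _ => rfl, fun _ h => absurd h (notMem_empty _),
      fun _ h => absurd h (Nat.not_lt_zero _)⟩

lemma topLevel_nonempty (hs : s.Nonempty) : (topLevel g s).Nonempty := by
  obtain ⟨x, hx, hmax⟩ := exists_max_image s g hs
  exact ⟨x, mem_filter.2 ⟨hx, hmax⟩⟩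

lemma RefinesOn.congr {o' : α → ℕ} (h : RefinesOn g s o) (heq : ∀ x ∈ s, o x = o' x) :
    RefinesOn g s o' := fun x hx y hy hxy =>
  h x hx y hy (by rwa [heq x hx, heq y hy])

lemma RefinesOn.mono {t : Finset α} (h : RefinesOn g s o) (hts : t ⊆ s) : RefinesOn g t o :=
  fun x hx y hy => h x (hts hx) y (hts hy)

lemma IsRanking.top_nonempty (h : IsRanking s (k + 1) o) : {x ∈ s | o x = k}.Nonempty := by
  obtain ⟨x, hx, hxk⟩ := h.exists_eq k (Nat.lt_succ_self k)
  exact ⟨x, mem_filter.2 ⟨hx, hxk⟩⟩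

lemma RefinesOn.top_subset_topLevel (h : RefinesOn g s o) (ho : IsRanking s (k + 1) o) :
    {x ∈ s | o x = k} ⊆ topLevel g s := by
  intro x hx
  obtain ⟨hxs, hxk⟩ := mem_filter.1 hx
  refine mem_filter.2 ⟨hxs, fun y hy => h y hy x hxs ?_⟩
  have := ho.lt y hy
  omega

section

variable [DecidableEq α]

lemma IsRanking.piecewise_top (h : IsRanking (s \ T) k o) (hTs : T ⊆ s) (hT : T.Nonempty) :
    IsRanking s (k + 1) (T.piecewise (fun _ => k) o) where
  eq_zero_of_notMem x hx := by
    rw [piecewise_eq_of_notMem _ _ _ (fun hxT => hx (hTs hxT))]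
    exact h.eq_zero_of_notMem x (fun hx' => hx (sdiff_subset hx'))
  lt x hx := by
    by_cases hxT : x ∈ T
    · simp [hxT]
    · rw [piecewise_eq_of_notMem _ _ _ hxT]
      exact (h.lt x (mem_sdiff.2 ⟨hx, hxT⟩)).trans (Nat.lt_succ_self k)
  exists_eq i hi := by
    rcases (Nat.lt_succ_iff.1 hi).lt_or_eq with hi | rfl
    · obtain ⟨x, hx, rfl⟩ := h.exists_eq i hi
      obtain ⟨hxs, hxT⟩ := mem_sdiff.1 hx
      exact ⟨x, hxs, piecewise_eq_of_notMem _ _ _ hxT⟩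
    · obtain ⟨x, hx⟩ := hT
      exact ⟨x, hTs hx, piecewise_eq_of_mem _ _ _ hx⟩

lemma IsRanking.filter_piecewise_top_eq (h : IsRanking (s \ T) k o) (hTs : T ⊆ s) :
    {x ∈ s | T.piecewise (fun _ => k) o x = k} = T := by
  ext x
  by_cases hxT : x ∈ T
  · simp [hxT, hTs hxT]
  · simp only [mem_filter, piecewise_eq_of_notMem _ _ _ hxT, hxT, iff_false]
    exact fun ⟨hxs, hx⟩ => (h.lt x (mem_sdiff.2 ⟨hxs, hxT⟩)).ne hx

lemma RefinesOn.piecewise_top (h : RefinesOn g (s \ T) o) (ho : IsRanking (s \ T) k o)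
    (hT : T ⊆ topLevel g s) : RefinesOn g s (T.piecewise (fun _ => k) o) := by
  intro x hx y hy hxy
  by_cases hyT : y ∈ T
  · exact (mem_filter.1 (hT hyT)).2 x hx
  have hxT : x ∉ T := by
    intro hxT
    rw [piecewise_eq_of_mem _ _ _ hxT, piecewise_eq_of_notMem _ _ _ hyT] at hxy
    exact absurd hxy (Nat.not_le.2 (ho.lt y (mem_sdiff.2 ⟨hy, hyT⟩)))
  rw [piecewise_eq_of_notMem _ _ _ hxT, piecewise_eq_of_notMem _ _ _ hyT] at hxy
  exact h x (mem_sdiff.2 ⟨hx, hxT⟩) y (mem_sdiff.2 ⟨hy, hyT⟩) hxy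

lemma IsRanking.sdiff_top (h : IsRanking s (k + 1) o) :
    IsRanking (s \ {x ∈ s | o x = k}) k ({x ∈ s | o x = k}.piecewise 0 o) where
  eq_zero_of_notMem x hx := by
    by_cases hxT : x ∈ {x ∈ s | o x = k}
    · exact piecewise_eq_of_mem _ _ _ hxT
    · rw [piecewise_eq_of_notMem _ _ _ hxT]
      exact h.eq_zero_of_notMem x fun hxs => hx (mem_sdiff.2 ⟨hxs, hxT⟩)
  lt x hx := by
    obtain ⟨hxs, hxT⟩ := mem_sdiff.1 hx
    rw [piecewise_eq_of_notMem _ _ _ hxT]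
    have := h.lt x hxs
    grind
  exists_eq i hi := by
    obtain ⟨x, hxs, rfl⟩ := h.exists_eq i (Nat.lt_succ_of_lt hi)
    have hxT : x ∉ {x ∈ s | o x = k} := by grind
    exact ⟨x, mem_sdiff.2 ⟨hxs, hxT⟩, piecewise_eq_of_notMem _ _ _ hxT⟩

lemma neg_one_pow_card_sdiff (hTs : T ⊆ s) :
    (-1 : ℤ) ^ #(s \ T) = (-1) ^ #s * (-1) ^ #T := by
  rw [← card_sdiff_add_card_eq_card hTs, pow_add, mul_assoc, ← pow_add,
    (Even.add_self #T).neg_one_pow, mul_one]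

lemma sum_powerset_erase_empty_neg_one_pow_card_sdiff {L : Finset α}
    (hLs : L ⊆ s) (hL : L.Nonempty) :
    ∑ T ∈ L.powerset.erase ∅, (-1 : ℤ) ^ #(s \ T) = -(-1) ^ #s := by
  rw [sum_erase_eq_sub (empty_mem_powerset L), sdiff_empty,
    sum_congr rfl fun T hT => neg_one_pow_card_sdiff ((mem_powerset.1 hT).trans hLs),
    ← mul_sum, sum_powerset_neg_one_pow_card_of_nonempty hL]
  ring

end

variable [Fintype α]

/-- The ordered set partitions of `s` into `k` blocks refining the preorder induced by `g`. -/
noncomputable def rankings (g : α → β) (s : Finset α) (k : ℕ) : Finset (α → ℕ) :=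
  {o ∈ Fintype.piFinset fun _ => range (k + 1) | IsRanking s k o ∧ RefinesOn g s o}

lemma mem_rankings : o ∈ rankings g s k ↔ IsRanking s k o ∧ RefinesOn g s o := by
  refine mem_filter.trans (and_iff_right_of_imp fun ⟨ho, _⟩ => Fintype.mem_piFinset.2 fun x => ?_)
  by_cases hx : x ∈ s
  · exact mem_range.2 ((ho.lt x hx).trans (Nat.lt_succ_self k))
  · simp [ho.eq_zero_of_notMem x hx]

lemma card_rankings_zero : #(rankings g s 0) = if s = ∅ then 1 else 0 := by
  split_ifs with hs
  · refine card_eq_one.2 ⟨0, eq_singleton_iff_unique_mem.2 ⟨?_, fun o ho => ?_⟩⟩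
    · exact mem_rankings.2
        ⟨isRanking_zero_iff.2 ⟨hs, rfl⟩, fun x hx => absurd hx (hs ▸ notMem_empty x)⟩
    · exact (isRanking_zero_iff.1 (mem_rankings.1 ho).1).2
  · exact card_eq_zero.2 (eq_empty_of_forall_notMem fun o ho =>
      hs (isRanking_zero_iff.1 (mem_rankings.1 ho).1).1)

theorem card_rankings_succ [DecidableEq α] :
    #(rankings g s (k + 1)) = ∑ T ∈ (topLevel g s).powerset.erase ∅, #(rankings g (s \ T) k) := by
  rw [← card_sigma]
  symm
  refine card_nbij' (fun To : (_ : Finset α) × (α → ℕ) => To.1.piecewise (fun _ => k) To.2)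
    (fun o => ⟨{x ∈ s | o x = k}, {x ∈ s | o x = k}.piecewise 0 o⟩) ?_ ?_ ?_ ?_
  · rintro ⟨T, o⟩ hTo
    obtain ⟨hT, hmem⟩ := mem_sigma.1 hTo
    obtain ⟨hT0, hTtop⟩ := mem_erase.1 hT
    have hTs : T ⊆ s := (mem_powerset.1 hTtop).trans topLevel_subset
    obtain ⟨ho, hgo⟩ := mem_rankings.1 hmem
    exact mem_rankings.2 ⟨ho.piecewise_top hTs (nonempty_iff_ne_empty.2 hT0),
      hgo.piecewise_top ho (mem_powerset.1 hTtop)⟩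
  · intro o hmem
    obtain ⟨ho, hgo⟩ := mem_rankings.1 hmem
    refine mem_sigma.2 ⟨mem_erase.2 ⟨ho.top_nonempty.ne_empty,
      mem_powerset.2 (hgo.top_subset_topLevel ho)⟩, mem_rankings.2 ⟨ho.sdiff_top, ?_⟩⟩
    exact (hgo.mono sdiff_subset).congr fun x hx =>
      (piecewise_eq_of_notMem _ _ _ (mem_sdiff.1 hx).2).symm
  · rintro ⟨T, o⟩ hTo
    obtain ⟨hT, hmem⟩ := mem_sigma.1 hTo
    have hTs : T ⊆ s := (mem_powerset.1 (mem_erase.1 hT).2).trans topLevel_subset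
    have ho := (mem_rankings.1 hmem).1
    have hTeq := ho.filter_piecewise_top_eq hTs
    refine Sigma.ext hTeq (heq_of_eq (funext fun x => ?_))
    simp only [hTeq]
    by_cases hxT : x ∈ T
    · rw [piecewise_eq_of_mem _ _ _ hxT]
      exact (ho.eq_zero_of_notMem x fun hx => (mem_sdiff.1 hx).2 hxT).symm
    · rw [piecewise_eq_of_notMem _ _ _ hxT, piecewise_eq_of_notMem _ _ _ hxT]
  · intro o _
    funext x
    dsimp only
    by_cases hx : x ∈ {x ∈ s | o x = k}
    · rw [piecewise_eq_of_mem _ _ _ hx, (mem_filter.1 hx).2]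
    · rw [piecewise_eq_of_notMem _ _ _ hx, piecewise_eq_of_notMem _ _ _ hx]

theorem sum_card_rankings [DecidableEq α] (g : α → β) (s : Finset α) {M : ℕ} (hM : #s < M) :
    ∑ k ∈ range M, (-1 : ℤ) ^ k * #(rankings g s k) = (-1) ^ #s := by
  induction s using Finset.strongInduction generalizing M with
  | H s ih =>
  obtain ⟨M, rfl⟩ : ∃ M', M = M' + 1 := ⟨M - 1, by omega⟩
  have hstep : ∑ k ∈ range M, (-1 : ℤ) ^ (k + 1) * #(rankings g s (k + 1)) =
      -∑ T ∈ (topLevel g s).powerset.erase ∅, (-1) ^ #(s \ T) := by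
    simp_rw [card_rankings_succ, Nat.cast_sum, mul_sum]
    rw [sum_comm, ← sum_neg_distrib]
    refine sum_congr rfl fun T hT => ?_
    obtain ⟨hT0, hTtop⟩ := mem_erase.1 hT
    have hTs : T ⊆ s := (mem_powerset.1 hTtop).trans topLevel_subset
    have hsub : s \ T ⊂ s := sdiff_ssubset hTs (nonempty_iff_ne_empty.2 hT0)
    rw [← ih (s \ T) hsub ((card_lt_card hsub).trans_le (Nat.lt_succ_iff.1 hM)), ← sum_neg_distrib]
    exact sum_congr rfl fun k _ => by ring
  rw [sum_range_succ', hstep, card_rankings_zero]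
  rcases s.eq_empty_or_nonempty with rfl | hs
  · simp [topLevel]
  · rw [sum_powerset_erase_empty_neg_one_pow_card_sdiff topLevel_subset (topLevel_nonempty hs),
      if_neg hs.ne_empty]
    simp

end Permutahedron

namespace Surjs

open Finset Permutahedron

variable {n : ℕ}

lemma isRanking (o : Surjs n) : IsRanking univ o.k fun x => (o.f x : ℕ) where
  eq_zero_of_notMem x hx := absurd (mem_univ x) hx
  lt x _ := (o.f x).isLt
  exists_eq i hi := by
    obtain ⟨x, hx⟩ := o.2 ⟨i, hi⟩
    exact ⟨x, mem_univ x, congrArg Fin.val hx⟩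

lemma refines_iff_refinesOn {o p : Surjs n} :
    o.Refines p ↔ RefinesOn p.f univ fun x => (o.f x : ℕ) :=
  ⟨fun h x _ y _ => h x y, fun h x y => h x (mem_univ x) y (mem_univ y)⟩

lemma eq_of_val_f_eq {o o' : Surjs n} (hk : o.k = o'.k) (hf : ∀ x, (o.f x : ℕ) = o'.f x) :
    o = o' := by
  obtain ⟨⟨k, f⟩, hf'⟩ := o
  obtain ⟨⟨k', f'⟩, hf''⟩ := o'
  obtain rfl : k = k' := Fin.ext hk
  obtain rfl : f = f' := funext fun x => Fin.ext (hf x)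
  rfl

def ofIsRanking {k : ℕ} {o : Fin n → ℕ} (ho : IsRanking univ k o) : Surjs n :=
  ⟨⟨⟨k, Nat.lt_succ_of_le (card_fin n ▸ ho.le_card)⟩, fun x => ⟨o x, ho.lt x (mem_univ x)⟩⟩,
    fun i => by
      obtain ⟨x, -, hx⟩ := ho.exists_eq i i.isLt
      exact ⟨x, Fin.ext hx⟩⟩

lemma card_refines_k_eq_card_rankings (p : Surjs n) (k : ℕ) :
    #{o ∈ {o : Surjs n | o.Refines p} | o.k = k} = #(rankings p.f univ k) := by
  refine card_bij (fun o _ x => (o.f x : ℕ)) (fun o ho => ?_) (fun o ho o' ho' h => ?_)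
    fun r hr => ?_
  · obtain ⟨hpo, rfl⟩ := mem_filter.1 ho
    exact mem_rankings.2 ⟨o.isRanking, refines_iff_refinesOn.1 (mem_filter.1 hpo).2⟩
  · exact eq_of_val_f_eq (((mem_filter.1 ho).2).trans (mem_filter.1 ho').2.symm) (congrFun h)
  · obtain ⟨hr, hpr⟩ := mem_rankings.1 hr
    refine ⟨ofIsRanking hr, mem_filter.2 ⟨mem_filter.2 ⟨mem_univ _, ?_⟩, rfl⟩, rfl⟩
    exact refines_iff_refinesOn.2 hpr

end Surjs

theorem euler_poincare_permutahedron_general (n : ℕ) (p : Surjs n) :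
    (∑ o : Surjs n, if o.Refines p then ((-1 : ℤ) ^ o.k) else 0) = (-1 : ℤ) ^ n := by
  rw [← Finset.sum_filter, ← Finset.sum_fiberwise_of_maps_to' (t := Finset.range (n + 1))
    (fun o _ => Finset.mem_range.2 o.1.1.isLt)]
  simp_rw [Finset.sum_const, Surjs.card_refines_k_eq_card_rankings, nsmul_eq_mul, mul_comm]
  simpa using Permutahedron.sum_card_rankings p.f Finset.univ (M := n + 1) (by simp)

/-- Euler–Poincaré relation for the face of the permutahedron corresponding to `p`:
the alternating sum of `(-1)^{k(o)}` over the surjections `o` refining `p` is `(-1)^n`. -/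
theorem euler_poincare_permutahedron (n : ℕ) (hn : 1 ≤ n) (p : Surjs n) :
    (∑ o : Surjs n, if o.Refines p then ((-1 : ℤ) ^ o.k) else 0) = (-1 : ℤ) ^ n :=
  euler_poincare_permutahedron_general n p
end

section
/- For every n ≥ 1, the numbers d_n of weighted Motzkin paths of length n with total increment −1 whose proper partial heights are all nonnegative satisfy the recurrence d_n = (1 if n = 1, else 0) + 4·d_{n−1} + Σ_{a+b=n−1} d_a·d_b (with d_0 = 0). Equivalently, the formal power series D := Σ_{n≥1} d_n·z^n ∈ ℤ[[z]] satisfies the functional equation D = z·(1 + 4D + D²). -/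
/-- A weighted Motzkin step: an up step, a down step, or one of four distinguishable
horizontal steps. -/
inductive WStep : Type
  | up : WStep
  | down : WStep
  | h1 : WStep
  | h2 : WStep
  | h3 : WStep
  | h4 : WStep

/-- The height increment of a weighted Motzkin step. -/
def WStep.inc : WStep → ℤ
  | .up => 1
  | .down => -1
  | _ => 0

/-- The total height increment of a weighted Motzkin path. -/
def hsum (p : List WStep) : ℤ := (p.map WStep.inc).sum

/-- `dnum n` : number of weighted Motzkin paths of length `n` with total increment `-1`
whose proper partial heights (after each step except the last) are all nonnegative. -/
noncomputable def dnum (n : ℕ) : ℕ :=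
  Nat.card {p : List WStep // p.length = n ∧ hsum p = -1 ∧
    ∀ i < n, 0 ≤ hsum (p.take i)}

/-- The generating series `D = Σ_{n≥1} d_n z^n`. -/
noncomputable def Dser : PowerSeries ℤ := PowerSeries.mk fun n => (dnum n : ℤ)

/-!
Read a path counted by `d_n` as one that reaches height `-1` for the first time at its last
step, and look at its first step. A down step must be the whole path (`n = 1`); a horizontal
step (four choices) is followed by such a path of length `n - 1`; an up step is followed by a
path first reaching `-2`, which is cut uniquely at its first visit to `-1` into two such paths
of total length `n - 1`. The cut is unique because no proper prefix of such a path is again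
one. Comparing coefficients turns the recurrence into `D = z (1 + 4D + D²)`.
-/

open Finset.HasAntidiagonal

@[simp] lemma hsum_nil : hsum [] = 0 := rfl

@[simp] lemma hsum_cons (x : WStep) (t : List WStep) : hsum (x :: t) = x.inc + hsum t := by
  simp [hsum]

@[simp] lemma hsum_append (p q : List WStep) : hsum (p ++ q) = hsum p + hsum q := by
  simp [hsum]

lemma WStep.neg_one_le_inc (x : WStep) : -1 ≤ x.inc := by
  cases x <;> decide

def FirstHits (c : ℤ) (p : List WStep) : Prop :=
  hsum p = c ∧ ∀ i < p.length, c < hsum (p.take i)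

lemma firstHits_cons {c : ℤ} {x : WStep} {t : List WStep} :
    FirstHits c (x :: t) ↔ c < 0 ∧ FirstHits (c - x.inc) t := by
  simp only [FirstHits, List.length_cons, Nat.forall_lt_succ_left, List.take_zero, hsum_nil,
    List.take_succ_cons, hsum_cons]
  constructor
  · rintro ⟨hs, h0, h⟩
    exact ⟨h0, by omega, fun i hi => by linarith [h i hi]⟩
  · rintro ⟨h0, hs, h⟩
    exact ⟨by omega, h0, fun i hi => by linarith [h i hi]⟩

lemma firstHits_zero_iff {p : List WStep} : FirstHits 0 p ↔ p = [] := by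
  cases p with
  | nil => simp [FirstHits]
  | cons x t => simp [firstHits_cons]

lemma FirstHits.append {c d : ℤ} {q r : List WStep} (hq : FirstHits c q) (hr : FirstHits d r)
    (hd : d < 0) : FirstHits (c + d) (q ++ r) := by
  refine ⟨by rw [hsum_append, hq.1, hr.1], fun i hi => ?_⟩
  rw [List.take_append, hsum_append]
  rcases lt_or_ge i q.length with hiq | hiq
  · rw [Nat.sub_eq_zero_of_le hiq.le, List.take_zero, hsum_nil, add_zero]
    linarith [hq.2 i hiq]
  · rw [List.take_of_length_le hiq, hq.1]
    rcases (i - q.length).eq_zero_or_pos with h0 | hpos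
    · simp [h0, hd]
    · have := hr.2 (i - q.length) (by simp at hi; omega)
      linarith

/-- Discrete intermediate value theorem: steps go down by at most one. -/
lemma exists_hsum_take_eq (t : List WStep) {c : ℤ} (ht : hsum t ≤ c) (hc : c ≤ 0) :
    ∃ k, hsum (t.take k) = c := by
  induction t generalizing c with
  | nil => exact ⟨0, by simp at ht ⊢; omega⟩
  | cons x s ih =>
    rcases hc.eq_or_lt with rfl | hc
    · exact ⟨0, by simp⟩
    · have := x.neg_one_le_inc
      obtain ⟨k, hk⟩ := ih (c := c - x.inc) (by simp at ht; omega) (by omega)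
      exact ⟨k + 1, by simp [hk]⟩

lemma FirstHits.exists_append_of_sub_one {c : ℤ} {t : List WStep} (ht : FirstHits (c - 1) t)
    (hc : c < 0) : ∃ q r, t = q ++ r ∧ FirstHits c q ∧ FirstHits (-1) r := by
  have hex : ∃ k, hsum (t.take k) = c := exists_hsum_take_eq t (by rw [ht.1]; omega) hc.le
  set a := Nat.find hex
  have ha : hsum (t.take a) = c := Nat.find_spec hex
  have hat : a < t.length := by
    by_contra! h
    rw [List.take_of_length_le h, ht.1] at ha
    omega
  refine ⟨t.take a, t.drop a, (List.take_append_drop a t).symm, ⟨ha, fun i hi => ?_⟩,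
    ⟨?_, fun i hi => ?_⟩⟩
  · simp only [List.length_take, lt_min_iff] at hi
    rw [List.take_take, min_eq_left hi.1.le]
    have := ht.2 i (by omega)
    have := Nat.find_min hex hi.1
    omega
  · have := hsum_append (t.take a) (t.drop a)
    rw [List.take_append_drop, ht.1, ha] at this
    omega
  · have := ht.2 (a + i) (by simp at hi; omega)
    rw [List.take_add, hsum_append, ha] at this
    omega

lemma FirstHits.eq_of_prefix {c : ℤ} {q q' : List WStep} (hq : FirstHits c q)
    (hq' : FirstHits c q') (h : q <+: q') : q = q' := by
  obtain ⟨s, rfl⟩ := h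
  cases s with
  | nil => simp
  | cons x s =>
    have := hq'.2 q.length (by simp)
    simp [hq.1] at this

lemma FirstHits.append_inj {c : ℤ} {q q' r r' : List WStep} (hq : FirstHits c q)
    (hq' : FirstHits c q') (h : q ++ r = q' ++ r') : q = q' ∧ r = r' := by
  have hqq : q = q' := by
    rcases List.prefix_or_prefix_of_prefix (List.prefix_append q r)
      (h ▸ List.prefix_append q' r') with hp | hp
    · exact hq.eq_of_prefix hq' hp
    · exact (hq'.eq_of_prefix hq hp).symm
  subst hqq
  exact ⟨rfl, List.append_cancel_left h⟩

lemma firstHits_up_cons {t : List WStep} :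
    FirstHits (-1) (WStep.up :: t) ↔ ∃ q r, t = q ++ r ∧ FirstHits (-1) q ∧ FirstHits (-1) r := by
  rw [firstHits_cons]
  constructor
  · rintro ⟨-, ht⟩
    exact FirstHits.exists_append_of_sub_one ht (by norm_num)
  · rintro ⟨q, r, rfl, hq, hr⟩
    exact ⟨by norm_num, hq.append hr (by norm_num)⟩

lemma firstHits_horizontal_cons {x : WStep} (hx : x.inc = 0) {t : List WStep} :
    FirstHits (-1) (x :: t) ↔ FirstHits (-1) t := by
  simp [firstHits_cons, hx]

lemma firstHits_down_cons {t : List WStep} : FirstHits (-1) (WStep.down :: t) ↔ t = [] := by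
  rw [firstHits_cons, ← firstHits_zero_iff]
  norm_num [WStep.inc]

instance : Fintype WStep where
  elems := ⟨↑[WStep.up, .down, .h1, .h2, .h3, .h4], by simp⟩
  complete x := by cases x <;> simp

lemma WStep.sum_univ {M : Type*} [AddCommMonoid M] (f : WStep → M) :
    ∑ x, f x = f .up + f .down + f .h1 + f .h2 + f .h3 + f .h4 := by
  simp only [Finset.sum, Finset.univ, Fintype.elems, Multiset.map_coe, Multiset.sum_coe,
    List.map_cons, List.map_nil, List.sum_cons, List.sum_nil, add_zero, add_assoc]

abbrev DPath (n : ℕ) : Type := {p : List WStep // p.length = n ∧ FirstHits (-1) p}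

instance {α : Type*} [Finite α] (n : ℕ) (P : List α → Prop) :
    Finite {p : List α // p.length = n ∧ P p} :=
  ((List.finite_length_eq α n).subset fun _ hp => hp.1).to_subtype

lemma dnum_eq_card (n : ℕ) : dnum n = Nat.card (DPath n) := by
  refine Nat.card_congr (Equiv.subtypeEquivRight fun p => and_congr_right fun hp => ?_)
  subst hp
  exact and_congr_right fun _ => forall₂_congr fun i _ => by omega

lemma dnum_zero : dnum 0 = 0 := by
  rw [dnum_eq_card, Nat.card_eq_zero]
  left
  constructor
  rintro ⟨p, hp, hs, -⟩
  rw [List.length_eq_zero_iff] at hp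
  simp [hp] at hs

def List.lengthSuccEquivSigma {α : Type*} (P : List α → Prop) (n : ℕ) :
    {p : List α // p.length = n + 1 ∧ P p} ≃ Σ x : α, {t : List α // t.length = n ∧ P (x :: t)} where
  toFun
    | ⟨x :: t, h⟩ => ⟨x, t, by simpa using h⟩
  invFun | ⟨x, t, h⟩ => ⟨x :: t, by simpa using h⟩
  left_inv
    | ⟨x :: t, h⟩ => rfl
  right_inv | ⟨x, t, h⟩ => rfl

lemma card_firstHits_horizontal_cons {x : WStep} (hx : x.inc = 0) (n : ℕ) :
    Nat.card {t : List WStep // t.length = n ∧ FirstHits (-1) (x :: t)} = dnum n := by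
  rw [dnum_eq_card]
  exact Nat.card_congr (Equiv.subtypeEquivRight fun t => by rw [firstHits_horizontal_cons hx])

lemma card_firstHits_down_cons (n : ℕ) :
    Nat.card {t : List WStep // t.length = n ∧ FirstHits (-1) (WStep.down :: t)} =
      if n = 0 then 1 else 0 := by
  simp only [firstHits_down_cons]
  split_ifs with hn
  · subst hn
    exact Nat.card_eq_one_iff_exists.2 ⟨⟨[], rfl, rfl⟩, fun ⟨t, _, ht⟩ => Subtype.ext ht⟩
  · exact Nat.card_eq_zero.2 (.inl ⟨fun ⟨t, hl, ht⟩ => hn (by simp [← hl, ht])⟩)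

def upAppend (n : ℕ) : (Σ ab : antidiagonal n, DPath ab.1.1 × DPath ab.1.2) →
    {t : List WStep // t.length = n ∧ FirstHits (-1) (WStep.up :: t)}
  | ⟨⟨(_, _), hab⟩, ⟨q, hql, hq⟩, ⟨r, hrl, hr⟩⟩ =>
    ⟨q ++ r, by simpa [hql, hrl] using mem_antidiagonal.1 hab,
      firstHits_up_cons.2 ⟨q, r, rfl, hq, hr⟩⟩

lemma upAppend_bijective (n : ℕ) : Function.Bijective (upAppend n) := by
  constructor
  · rintro ⟨⟨⟨a, b⟩, hab⟩, ⟨q, hql, hq⟩, ⟨r, hrl, hr⟩⟩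
      ⟨⟨⟨a', b'⟩, hab'⟩, ⟨q', hql', hq'⟩, ⟨r', hrl', hr'⟩⟩ h
    obtain ⟨rfl, rfl⟩ := hq.append_inj hq' (congrArg Subtype.val h)
    obtain rfl : a = a' := hql.symm.trans hql'
    obtain rfl : b = b' := hrl.symm.trans hrl'
    rfl
  · rintro ⟨t, hl, ht⟩
    obtain ⟨q, r, rfl, hq, hr⟩ := firstHits_up_cons.1 ht
    exact ⟨⟨⟨(q.length, r.length), by simpa using hl⟩, ⟨q, rfl, hq⟩,
      ⟨r, rfl, hr⟩⟩, rfl⟩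

lemma card_firstHits_up_cons (n : ℕ) :
    Nat.card {t : List WStep // t.length = n ∧ FirstHits (-1) (WStep.up :: t)} =
      ∑ ab ∈ antidiagonal n, dnum ab.1 * dnum ab.2 := by
  rw [← Nat.card_eq_of_bijective _ (upAppend_bijective n), Nat.card_sigma,
    ← Finset.sum_coe_sort (antidiagonal n)]
  simp only [Nat.card_prod, dnum_eq_card]

lemma dnum_succ (n : ℕ) :
    dnum (n + 1) = (if n = 0 then 1 else 0) + 4 * dnum n +
      ∑ ab ∈ antidiagonal n, dnum ab.1 * dnum ab.2 := by
  rw [dnum_eq_card, Nat.card_congr (List.lengthSuccEquivSigma _ n), Nat.card_sigma,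
    WStep.sum_univ, card_firstHits_up_cons, card_firstHits_down_cons,
    card_firstHits_horizontal_cons rfl, card_firstHits_horizontal_cons rfl,
    card_firstHits_horizontal_cons rfl, card_firstHits_horizontal_cons rfl]
  ring

lemma coeff_Dser (n : ℕ) : PowerSeries.coeff n Dser = dnum n := PowerSeries.coeff_mk _ _

theorem dnum_recurrence :
    (∀ n : ℕ, 1 ≤ n →
        dnum n = (if n = 1 then 1 else 0) + 4 * dnum (n - 1) +
          ∑ ab ∈ Finset.HasAntidiagonal.antidiagonal (n - 1), dnum ab.1 * dnum ab.2) ∧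
      Dser = PowerSeries.X * (1 + 4 * Dser + Dser ^ 2) := by
  refine ⟨fun n hn => ?_, ?_⟩
  · obtain ⟨m, rfl⟩ := Nat.exists_eq_add_of_le' hn
    simp [dnum_succ]
  · ext (_ | n)
    · simp [coeff_Dser, dnum_zero]
    · rw [PowerSeries.coeff_succ_X_mul, sq, ← map_ofNat PowerSeries.C 4, map_add, map_add,
        PowerSeries.coeff_one, PowerSeries.coeff_C_mul, PowerSeries.coeff_mul, coeff_Dser,
        coeff_Dser, dnum_succ]
      simp [coeff_Dser]
end
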